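/- arXiv:2002.07745 — 8 statements merged into one kernel-verified Lean document; each statement's English description precedes it below -/
import Mathlib

section
/- Let x* = (x*^{(1)},…,x*^{(n)}) be an extreme point of the feasible region P = {x : Σ_{i=1}^n A_i x^{(i)} = b_0 and x^{(i)} ∈ Q_i for all i} of the block-structured LP. Then the number of indices i ∈ {1,…,n} for which x*^{(i)} is not an extreme point of Q_i is at most r. In particular, if every Q_i is an integral polyhedron (all its extreme points are integer vectors), then all but at most r of the blocks x*^{(i)} are integer vectors. -/
/-!
If more than `r` blocks of a feasible point `x` fail to be extreme in their `Q i`, pick for each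
such block a direction `d i ≠ 0` with `x i ± d i ∈ Q i`. Pushed through the linking map these
give more than `r` vectors of `ℝ^r`, so they are linearly dependent; after rescaling the
dependency so that all coefficients lie in `[-1, 1]`, it moves `x` in both directions along a
nonzero vector without leaving `P`, and `x` is not extreme. When the extreme points of every
`Q i` are integral, each non-integral block is a non-extreme one.
-/

open Finset

/-- `Q` is a polyhedron: the solution set of finitely many linear inequalities. -/
def IsPolyhedron {t : ℕ} (Q : Set (Fin t → ℝ)) : Prop :=
  ∃ (m : ℕ) (D : Matrix (Fin m) (Fin t) ℝ) (p : Fin m → ℝ),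
    Q = {x | ∀ k, ∑ j, D k j * x j ≤ p k}

theorem IsPolyhedron.convex {t : ℕ} {Q : Set (Fin t → ℝ)} (h : IsPolyhedron Q) :
    Convex ℝ Q := by
  obtain ⟨m, D, p, rfl⟩ := h
  simp only [Set.ofPred_forall]
  exact convex_iInter fun k ↦
    convex_halfSpace_le (LinearMap.proj k ∘ₗ D.mulVecLin).isLinear (p k)

section Extreme

variable {𝕜 E : Type*} [Field 𝕜] [LinearOrder 𝕜] [IsStrictOrderedRing 𝕜]
  [AddCommGroup E] [Module 𝕜 E] {A : Set E} {x d : E}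

theorem eq_zero_of_mem_extremePoints_of_add_mem_of_sub_mem (hx : x ∈ A.extremePoints 𝕜)
    (hadd : x + d ∈ A) (hsub : x - d ∈ A) : d = 0 := by
  have hmid : x ∈ openSegment 𝕜 (x + d) (x - d) :=
    ⟨1 / 2, 1 / 2, by norm_num, by norm_num, by norm_num, by module⟩
  simpa using hx.2 hadd hsub hmid

theorem Convex.exists_add_mem_sub_mem_of_notMem_extremePoints (hA : Convex 𝕜 A) (hx : x ∈ A)
    (hxA : x ∉ A.extremePoints 𝕜) : ∃ d ≠ 0, x + d ∈ A ∧ x - d ∈ A := by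
  simp only [mem_extremePoints_iff_left, hx, true_and, not_forall] at hxA
  obtain ⟨x₁, hx₁, x₂, hx₂, hseg, hne⟩ := hxA
  rw [openSegment_eq_image'] at hseg
  obtain ⟨θ, ⟨hθ₀, hθ₁⟩, rfl⟩ := hseg
  have hne' : x₂ - x₁ ≠ 0 := fun h ↦ hne (by simp [h])
  set m := min θ (1 - θ)
  have hm : 0 < m := lt_min hθ₀ (sub_pos.2 hθ₁)
  refine ⟨m • (x₂ - x₁), smul_ne_zero hm.ne' hne', ?_, ?_⟩
  · convert hA.add_smul_sub_mem hx₁ hx₂ (t := θ + m)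
      ⟨by linarith, by linarith [min_le_right θ (1 - θ)]⟩ using 1
    module
  · convert hA.add_smul_sub_mem hx₁ hx₂ (t := θ - m)
      ⟨by linarith [min_le_left θ (1 - θ)], by linarith⟩ using 1
    module

theorem Convex.add_smul_mem_of_abs_le_one (hA : Convex 𝕜 A) (hx : x ∈ A) (hadd : x + d ∈ A)
    (hsub : x - d ∈ A) {c : 𝕜} (hc : |c| ≤ 1) : x + c • d ∈ A := by
  rcases le_or_gt 0 c with hc₀ | hc₀
  · exact hA.add_smul_mem hx hadd ⟨hc₀, (le_abs_self c).trans hc⟩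
  · have := hA.add_smul_mem hx (y := -d) (by rwa [← sub_eq_add_neg])
      ⟨neg_nonneg.2 hc₀.le, (neg_le_abs c).trans hc⟩
    rwa [neg_smul_neg] at this

end Extreme

theorem Submodule.exists_mem_ne_zero_forall_abs_le_one {𝕜 ι : Type*} [Field 𝕜] [LinearOrder 𝕜]
    [IsStrictOrderedRing 𝕜] [Fintype ι] {p : Submodule 𝕜 (ι → 𝕜)} (hp : p ≠ ⊥) :
    ∃ c ∈ p, c ≠ 0 ∧ ∀ i, |c i| ≤ 1 := by
  obtain ⟨c, hc, hc₀⟩ := (Submodule.ne_bot_iff p).1 hp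
  obtain ⟨i₀, hi₀⟩ := Function.ne_iff.1 hc₀
  have hle : ∀ i, |c i| ≤ ∑ j, |c j| := fun i ↦
    Finset.single_le_sum (fun j _ ↦ abs_nonneg (c j)) (Finset.mem_univ i)
  have hpos : 0 < ∑ j, |c j| := (abs_pos.2 hi₀).trans_le (hle i₀)
  refine ⟨(∑ j, |c j|)⁻¹ • c, p.smul_mem _ hc, smul_ne_zero (inv_ne_zero hpos.ne') hc₀,
    fun i ↦ ?_⟩
  rw [Pi.smul_apply, smul_eq_mul, abs_mul, abs_inv, abs_of_pos hpos, inv_mul_le_iff₀ hpos,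
    mul_one]
  exact hle i

theorem ncard_setOf_notMem_extremePoints_le {𝕜 ι F : Type*} [Field 𝕜] [LinearOrder 𝕜]
    [IsStrictOrderedRing 𝕜] [Finite ι] {E : ι → Type*} [∀ i, AddCommGroup (E i)]
    [∀ i, Module 𝕜 (E i)] [AddCommGroup F] [Module 𝕜 F] [FiniteDimensional 𝕜 F]
    {Q : ∀ i, Set (E i)} (hQ : ∀ i, Convex 𝕜 (Q i)) (Φ : (∀ i, E i) →ₗ[𝕜] F) (b : F)
    {x : ∀ i, E i} (hx : x ∈ {y | Φ y = b ∧ ∀ i, y i ∈ Q i}.extremePoints 𝕜) :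
    {i | x i ∉ (Q i).extremePoints 𝕜}.ncard ≤ Module.finrank 𝕜 F := by
  classical
  set S := {i | x i ∉ (Q i).extremePoints 𝕜}
  have := Fintype.ofFinite S
  obtain ⟨hxb, hxQ⟩ := hx.1
  have hdir (i : S) : ∃ d ≠ 0, x i + d ∈ Q i ∧ x i - d ∈ Q i :=
    (hQ i).exists_add_mem_sub_mem_of_notMem_extremePoints (hxQ i) i.2
  choose d hd₀ hdQ using hdir
  let Ψ : (S → 𝕜) →ₗ[𝕜] ∀ i, E i :=
    { toFun c i := if h : i ∈ S then c ⟨i, h⟩ • d ⟨i, h⟩ else 0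
      map_add' c c' := by ext i; simp only [Pi.add_apply]; split_ifs <;> simp [add_smul]
      map_smul' a c := by ext i; simp only [Pi.smul_apply]; split_ifs <;> simp [mul_smul] }
  by_contra! hlt
  have hker : LinearMap.ker (Φ ∘ₗ Ψ) ≠ ⊥ := LinearMap.ker_ne_bot_of_finrank_lt <| by
    rwa [Module.finrank_fintype_fun_eq_card, ← Nat.card_eq_fintype_card, Nat.card_coe_set_eq]
  obtain ⟨c, hc, hc₀, hc₁⟩ := Submodule.exists_mem_ne_zero_forall_abs_le_one hker
  have hΦ : Φ (Ψ c) = 0 := hc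
  have hmem (σ : 𝕜) (hσ : |σ| = 1) : x + σ • Ψ c ∈ {y | Φ y = b ∧ ∀ i, y i ∈ Q i} := by
    refine ⟨by simp [hxb, hΦ], fun i ↦ ?_⟩
    by_cases hi : i ∈ S
    · simpa [Ψ, hi, smul_smul] using (hQ i).add_smul_mem_of_abs_le_one (hxQ i)
        (hdQ ⟨i, hi⟩).1 (hdQ ⟨i, hi⟩).2 (c := σ * c ⟨i, hi⟩)
        (by rw [abs_mul, hσ, one_mul]; exact hc₁ _)
    · simpa [Ψ, hi] using hxQ i
  have hΨ : Ψ c = 0 := eq_zero_of_mem_extremePoints_of_add_mem_of_sub_mem hx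
    (by simpa using hmem 1 (by simp)) (by simpa [sub_eq_add_neg] using hmem (-1) (by simp))
  obtain ⟨s, hs⟩ := Function.ne_iff.1 hc₀
  have := congrFun hΨ s
  simp only [Ψ, LinearMap.coe_mk, AddHom.coe_mk, s.2, dif_pos, Pi.zero_apply, smul_eq_zero,
    hd₀ s, or_false] at this
  exact hs this

def linkingMap {ι m : Type*} [Fintype ι] [Fintype m] {t : ι → Type*} [∀ i, Fintype (t i)]
    (A : (i : ι) → Matrix m (t i) ℤ) : ((i : ι) → t i → ℝ) →ₗ[ℝ] m → ℝ :=
  ∑ i, ((A i).map (Int.cast : ℤ → ℝ)).mulVecLin ∘ₗ LinearMap.proj i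

theorem linkingMap_apply {ι m : Type*} [Fintype ι] [Fintype m] {t : ι → Type*}
    [∀ i, Fintype (t i)] (A : (i : ι) → Matrix m (t i) ℤ) (x : (i : ι) → t i → ℝ) (k : m) :
    linkingMap A x k = ∑ i, ∑ j, (A i k j : ℝ) * x i j := by
  simp [linkingMap, Matrix.mulVec, dotProduct]

theorem vertex_few_fractional_blocks_general
    (n r : ℕ)
    (t : Fin n → ℕ)
    (A : (i : Fin n) → Matrix (Fin r) (Fin (t i)) ℤ)
    (b0 : Fin r → ℤ)
    (Q : (i : Fin n) → Set (Fin (t i) → ℝ))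
    (hQpoly : ∀ i, IsPolyhedron (Q i))
    (P : Set ((i : Fin n) → Fin (t i) → ℝ))
    (hP : P =
      {x | (∀ k, ∑ i, ∑ j, (A i k j : ℝ) * x i j = (b0 k : ℝ)) ∧ ∀ i, x i ∈ Q i})
    (xstar : (i : Fin n) → Fin (t i) → ℝ)
    (hvert : xstar ∈ Set.extremePoints ℝ P) :
    {i : Fin n | xstar i ∉ Set.extremePoints ℝ (Q i)}.ncard ≤ r ∧
      ((∀ i, ∀ y ∈ Set.extremePoints ℝ (Q i), ∀ j, ∃ m : ℤ, y j = (m : ℝ)) →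
        {i : Fin n | ¬ ∀ j, ∃ m : ℤ, xstar i j = (m : ℝ)}.ncard ≤ r) := by
  have hP' : P = {y | linkingMap A y = (fun k ↦ (b0 k : ℝ)) ∧ ∀ i, y i ∈ Q i} := by
    simp only [hP, funext_iff, linkingMap_apply]
  have hblocks : {i | xstar i ∉ (Q i).extremePoints ℝ}.ncard ≤ r := by
    simpa using ncard_setOf_notMem_extremePoints_le (fun i ↦ (hQpoly i).convex) (linkingMap A)
      _ (hP' ▸ hvert)
  refine ⟨hblocks, fun hint ↦ (Set.ncard_le_ncard ?_ (Set.toFinite _)).trans hblocks⟩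
  exact fun i hi hext ↦ hi (hint i _ hext)

/-- At an extreme point of the feasible region of the
block-structured LP, at most `r` blocks fail to be extreme points of their
respective `Q i`; in particular, if every `Q i` is integral, all but at most `r`
blocks are integer vectors. -/
theorem vertex_few_fractional_blocks
    (n r : ℕ) (hn : 1 ≤ n) (hr : 1 ≤ r)
    (t : Fin n → ℕ) (ht : ∀ i, 1 ≤ t i)
    (A : (i : Fin n) → Matrix (Fin r) (Fin (t i)) ℤ)
    (b0 : Fin r → ℤ)
    (Q : (i : Fin n) → Set (Fin (t i) → ℝ))
    (hQpoly : ∀ i, IsPolyhedron (Q i))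
    (hQnonneg : ∀ i, ∀ x ∈ Q i, ∀ j, 0 ≤ x j)
    (P : Set ((i : Fin n) → Fin (t i) → ℝ))
    (hP : P =
      {x | (∀ k, ∑ i, ∑ j, (A i k j : ℝ) * x i j = (b0 k : ℝ)) ∧ ∀ i, x i ∈ Q i})
    (xstar : (i : Fin n) → Fin (t i) → ℝ)
    (hvert : xstar ∈ Set.extremePoints ℝ P) :
    {i : Fin n | xstar i ∉ Set.extremePoints ℝ (Q i)}.ncard ≤ r ∧
      ((∀ i, ∀ y ∈ Set.extremePoints ℝ (Q i), ∀ j, ∃ m : ℤ, y j = (m : ℝ)) →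
        {i : Fin n | ¬ ∀ j, ∃ m : ℤ, xstar i j = (m : ℝ)}.ncard ≤ r) :=
  vertex_few_fractional_blocks_general n r t A b0 Q hQpoly P hP xstar hvert
end

section
/- Let x* = (x*^{(1)},…,x*^{(n)}) be an extreme point of the feasible region P = {x : Σ_{i=1}^n A_i x^{(i)} = b_0 and x^{(i)} ∈ Q_i for all i} of the block-structured LP. Then for every i ∈ {1,…,n}, the minimal face of Q_i containing x*^{(i)} has affine dimension at most r. -/
open Finset

/-- `F` is a face of `Q`: the set of maximizers over `Q` of some linear functional. -/
def IsFaceOf {t : ℕ} (F Q : Set (Fin t → ℝ)) : Prop :=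
  ∃ c : Fin t → ℝ, F = {x | x ∈ Q ∧ ∀ y ∈ Q, ∑ j, c j * y j ≤ ∑ j, c j * x j}

/-- The minimal face of `Q` containing `x`: the intersection of all faces of `Q`
containing `x`. -/
def minimalFace {t : ℕ} (Q : Set (Fin t → ℝ)) (x : Fin t → ℝ) : Set (Fin t → ℝ) :=
  {y | ∀ F, IsFaceOf F Q → x ∈ F → y ∈ F}

/-!
If `d` lies in the direction space of the minimal face of `Q i` at `x* i`, then `d` annihilates
every constraint of `Q i` that is tight at `x* i`, so `x* i ± ε d ∈ Q i` for small `ε > 0`.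
If moreover `A i d = 0`, moving only block `i` by `± ε d` stays in `P`, and extremality of `x*`
forces `d = 0`. Hence `A i` is injective on that direction space, whose dimension is therefore at
most `r`.
-/

open Filter Topology Matrix Module

theorem eq_zero_of_add_mem_of_sub_mem_of_mem_extremePoints {𝕜 E : Type*} [Field 𝕜]
    [LinearOrder 𝕜] [IsStrictOrderedRing 𝕜] [AddCommGroup E] [Module 𝕜 E] {P : Set E}
    {x v : E} (hx : x ∈ P.extremePoints 𝕜) (h₁ : x + v ∈ P) (h₂ : x - v ∈ P) : v = 0 := by
  have : Invertible (2 : 𝕜) := invertibleOfNonzero two_ne_zero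
  simpa using hx.2 h₁ h₂ (mem_openSegment_add_sub x v)

theorem vectorSpan_le_ker_of_forall_eq {k E F : Type*} [Ring k] [AddCommGroup E] [Module k E]
    [AddCommGroup F] [Module k F] {S : Set E} (f : E →ₗ[k] F) {c : F}
    (hS : ∀ y ∈ S, f y = c) : vectorSpan k S ≤ LinearMap.ker f := by
  rw [vectorSpan_def, Submodule.span_le]
  rintro _ ⟨a, ha, b, hb, rfl⟩
  simp [hS a ha, hS b hb]

section Polyhedron

variable {m t : ℕ} {D : Matrix (Fin m) (Fin t) ℝ} {p : Fin m → ℝ} {x : Fin t → ℝ}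

theorem mulVec_apply_eq_of_mem_minimalFace (hx : D *ᵥ x ≤ p) {k : Fin m}
    (hk : (D *ᵥ x) k = p k) {y : Fin t → ℝ} (hy : y ∈ minimalFace {z | D *ᵥ z ≤ p} x) :
    (D *ᵥ y) k = p k := by
  -- the row `D k` is maximized over the polyhedron exactly where constraint `k` is tight
  have hface : IsFaceOf {z | D *ᵥ z ≤ p ∧ ∀ z' ∈ {z | D *ᵥ z ≤ p}, (D *ᵥ z') k ≤ (D *ᵥ z) k}
      {z | D *ᵥ z ≤ p} := ⟨D k, rfl⟩
  obtain ⟨hyQ, hymax⟩ := hy _ hface ⟨hx, fun z hz => hk ▸ hz k⟩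
  exact le_antisymm (hyQ k) (hk ▸ hymax x hx)

theorem vectorSpan_minimalFace_le_ker (hx : D *ᵥ x ≤ p) {k : Fin m} (hk : (D *ᵥ x) k = p k) :
    vectorSpan ℝ (minimalFace {z | D *ᵥ z ≤ p} x) ≤
      LinearMap.ker ((LinearMap.proj k).comp D.mulVecLin) :=
  vectorSpan_le_ker_of_forall_eq _ fun _ hy => mulVec_apply_eq_of_mem_minimalFace hx hk hy

theorem eventually_add_smul_mem_polyhedron (hx : D *ᵥ x ≤ p) {d : Fin t → ℝ}
    (hd : ∀ k, (D *ᵥ x) k = p k → (D *ᵥ d) k = 0) :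
    ∀ᶠ s in 𝓝 (0 : ℝ), D *ᵥ (x + s • d) ≤ p := by
  refine eventually_all.2 fun k => ?_
  simp only [mulVec_add, mulVec_smul, Pi.add_apply, Pi.smul_apply, smul_eq_mul]
  rcases (hx k).eq_or_lt with hk | hk
  · exact .of_forall fun s => by simp [hk, hd k hk]
  · exact (ContinuousAt.eventually_lt (by fun_prop) continuousAt_const (by simpa using hk)).mono
      fun _ => le_of_lt

theorem exists_pos_add_smul_mem_and_sub_smul_mem_polyhedron (hx : D *ᵥ x ≤ p)
    {d : Fin t → ℝ} (hd : ∀ k, (D *ᵥ x) k = p k → (D *ᵥ d) k = 0) :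
    ∃ ε : ℝ, 0 < ε ∧ D *ᵥ (x + ε • d) ≤ p ∧ D *ᵥ (x - ε • d) ≤ p := by
  obtain ⟨ε, hε, h⟩ := Metric.eventually_nhds_iff.1 (eventually_add_smul_mem_polyhedron hx hd)
  have hε2 : dist (ε / 2) 0 < ε ∧ dist (-(ε / 2)) 0 < ε := by
    simp only [Real.dist_0_eq_abs, abs_neg, abs_of_pos (half_pos hε)]
    constructor <;> linarith
  exact ⟨ε / 2, half_pos hε, h hε2.1, by simpa [sub_eq_add_neg] using h hε2.2⟩

end Polyhedron

section BlockLP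

variable {ι κ : Type*} [Fintype ι] {τ : ι → Type*} [∀ i, Fintype (τ i)]

def blockFeasible (A : (i : ι) → Matrix κ (τ i) ℝ) (b : κ → ℝ) (Q : (i : ι) → Set (τ i → ℝ)) :
    Set ((i : ι) → τ i → ℝ) :=
  {x | ∑ i, A i *ᵥ x i = b ∧ ∀ i, x i ∈ Q i}

variable {A : (i : ι) → Matrix κ (τ i) ℝ} {b : κ → ℝ} {Q : (i : ι) → Set (τ i → ℝ)}
  {x : (i : ι) → τ i → ℝ} {i : ι} {w : τ i → ℝ}

theorem add_single_mem_blockFeasible [DecidableEq ι] (hx : x ∈ blockFeasible A b Q) (hw : A i *ᵥ w = 0)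
    (hQ : x i + w ∈ Q i) : x + Pi.single i w ∈ blockFeasible A b Q := by
  refine ⟨?_, fun j => ?_⟩
  · have : ∑ j, A j *ᵥ (Pi.single i w : (j : ι) → τ j → ℝ) j = 0 := by
      rw [Fintype.sum_eq_single i fun j hj => by simp [Pi.single_eq_of_ne hj]]
      simpa using hw
    simp [mulVec_add, Finset.sum_add_distrib, this, hx.1]
  · rcases eq_or_ne j i with rfl | hj
    · simpa using hQ
    · simpa [Pi.single_eq_of_ne hj] using hx.2 j

theorem eq_zero_of_mem_extremePoints_blockFeasible
    (hx : x ∈ (blockFeasible A b Q).extremePoints ℝ) (hw : A i *ᵥ w = 0)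
    (h₁ : x i + w ∈ Q i) (h₂ : x i - w ∈ Q i) : w = 0 := by
  classical
  have h₂' : x - Pi.single i w ∈ blockFeasible A b Q := by
    simpa [Pi.single_neg, sub_eq_add_neg] using
      add_single_mem_blockFeasible (w := -w) hx.1 (by simp [mulVec_neg, hw])
        (by simpa [sub_eq_add_neg] using h₂)
  simpa using eq_zero_of_add_mem_of_sub_mem_of_mem_extremePoints hx
    (add_single_mem_blockFeasible hx.1 hw h₁) h₂'

end BlockLP

theorem finrank_vectorSpan_minimalFace_le_of_mem_extremePoints {ι κ : Type*} [Fintype ι]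
    [Fintype κ] {t : ι → ℕ} {A : (i : ι) → Matrix κ (Fin (t i)) ℝ} {b : κ → ℝ}
    {Q : (i : ι) → Set (Fin (t i) → ℝ)} {x : (i : ι) → Fin (t i) → ℝ}
    (hx : x ∈ (blockFeasible A b Q).extremePoints ℝ) {i : ι} (hQ : IsPolyhedron (Q i)) :
    finrank ℝ (vectorSpan ℝ (minimalFace (Q i) (x i))) ≤ Fintype.card κ := by
  obtain ⟨m, D, p, hQi⟩ := hQ
  replace hQi : Q i = {z | D *ᵥ z ≤ p} := hQi
  have hxi : D *ᵥ x i ≤ p := by simpa [hQi] using hx.1.2 i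
  have hQi_mem : ∀ z, D *ᵥ z ≤ p → z ∈ Q i := fun z hz => by rwa [hQi]
  have hdisj :
      Disjoint (vectorSpan ℝ (minimalFace (Q i) (x i))) (LinearMap.ker (A i).mulVecLin) := by
    refine LinearMap.disjoint_ker.2 fun d hdV hAd => ?_
    have hd : ∀ k, (D *ᵥ x i) k = p k → (D *ᵥ d) k = 0 := fun k hk =>
      vectorSpan_minimalFace_le_ker hxi hk (hQi ▸ hdV)
    obtain ⟨ε, hε, h₁, h₂⟩ := exists_pos_add_smul_mem_and_sub_smul_mem_polyhedron hxi hd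
    have hAεd : A i *ᵥ (ε • d) = 0 := by rw [mulVec_smul, ← mulVecLin_apply, hAd, smul_zero]
    have hεd :=
      eq_zero_of_mem_extremePoints_blockFeasible hx hAεd (hQi_mem _ h₁) (hQi_mem _ h₂)
    exact (smul_eq_zero.1 hεd).resolve_left hε.ne'
  simpa using LinearMap.finrank_le_finrank_of_injective
    (LinearMap.injective_domRestrict_iff.2 hdisj)

theorem vertex_minimal_face_dimension_general
    (n r : ℕ)
    (t : Fin n → ℕ)
    (A : (i : Fin n) → Matrix (Fin r) (Fin (t i)) ℤ)
    (b0 : Fin r → ℤ)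
    (Q : (i : Fin n) → Set (Fin (t i) → ℝ))
    (hQpoly : ∀ i, IsPolyhedron (Q i))
    (P : Set ((i : Fin n) → Fin (t i) → ℝ))
    (hP : P =
      {x | (∀ k, ∑ i, ∑ j, (A i k j : ℝ) * x i j = (b0 k : ℝ)) ∧ ∀ i, x i ∈ Q i})
    (xstar : (i : Fin n) → Fin (t i) → ℝ)
    (hvert : xstar ∈ Set.extremePoints ℝ P) :
    ∀ i, Module.finrank ℝ (vectorSpan ℝ (minimalFace (Q i) (xstar i))) ≤ r := by
  have hP_block :
      P = blockFeasible (fun i => (A i).map (Int.cast : ℤ → ℝ)) (Int.cast ∘ b0) Q := by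
    simp only [hP, blockFeasible, funext_iff, Finset.sum_apply, mulVec, dotProduct, map_apply,
      Function.comp_apply]
  intro i
  exact (finrank_vectorSpan_minimalFace_le_of_mem_extremePoints (hP_block ▸ hvert)
    (hQpoly i)).trans_eq (Fintype.card_fin r)

/-- At an extreme point of the feasible region of the
block-structured LP, the minimal face of each `Q i` containing the block
`x* i` has affine dimension at most `r`. -/
theorem vertex_minimal_face_dimension
    (n r : ℕ) (hn : 1 ≤ n) (hr : 1 ≤ r)
    (t : Fin n → ℕ) (ht : ∀ i, 1 ≤ t i)
    (A : (i : Fin n) → Matrix (Fin r) (Fin (t i)) ℤ)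
    (b0 : Fin r → ℤ)
    (Q : (i : Fin n) → Set (Fin (t i) → ℝ))
    (hQpoly : ∀ i, IsPolyhedron (Q i))
    (hQnonneg : ∀ i, ∀ x ∈ Q i, ∀ j, 0 ≤ x j)
    (P : Set ((i : Fin n) → Fin (t i) → ℝ))
    (hP : P =
      {x | (∀ k, ∑ i, ∑ j, (A i k j : ℝ) * x i j = (b0 k : ℝ)) ∧ ∀ i, x i ∈ Q i})
    (xstar : (i : Fin n) → Fin (t i) → ℝ)
    (hvert : xstar ∈ Set.extremePoints ℝ P) :
    ∀ i, Module.finrank ℝ (vectorSpan ℝ (minimalFace (Q i) (xstar i))) ≤ r :=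
  vertex_minimal_face_dimension_general n r t A b0 Q hQpoly P hP xstar hvert
end

section
/- (Steinitz lemma, with constant c(r) = r.) Let ‖·‖ be any norm on ℝ^r and let x_1,…,x_n ∈ ℝ^r satisfy Σ_{i=1}^n x_i = 0 and ‖x_i‖ ≤ 1 for each i. Then there exists a permutation π of {1,…,n} such that for every k ∈ {1,…,n} the partial sum satisfies ‖Σ_{j=1}^k x_{π(j)}‖ ≤ r. -/
/-!
Following Grinberg and Sevastyanov, let `P(A, d)` be the polytope of weights `c ∈ [0,1]^A` with
`∑ c i = d` and `∑ c i • x i = 0`. A point of `P(A, |A| - r)` bounds the full sum: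
`‖∑_A x i‖ = ‖∑_A (1 - c i) • x i‖ ≤ ∑_A (1 - c i) = r`. Scaling it gives a point of
`P(A, |A| - r - 1)`, and a vertex of that polytope has at most `r + 1` coordinates in `(0, 1)`,
since it is cut out of the cube by `r + 1` linear equations; counting its total mass then forces a
zero coordinate `i`, so `P(A \ {i}, |A \ {i}| - r)` is nonempty. Starting from `c ≡ 1` on all
indices (this is where `∑ x i = 0` enters) and repeatedly removing such an `i`, the removed indices,
read backwards, give the required ordering.
-/

open Finset Module

variable {ι E : Type*} [AddCommGroup E] [Module ℝ E]

-- Vanishing off `A` makes this a compact subset of `ι → ℝ`.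
def steinitzPolytope (x : ι → E) (A : Finset ι) (d : ℝ) : Set (ι → ℝ) :=
  {c | (∀ i ∉ A, c i = 0) ∧ (∀ i ∈ A, c i ∈ Set.Icc 0 1) ∧ ∑ i ∈ A, c i = d ∧
    ∑ i ∈ A, c i • x i = 0}

theorem exists_nontrivial_affine_relation [FiniteDimensional ℝ E] (x : ι → E) {F : Finset ι}
    (hF : finrank ℝ E + 1 < #F) :
    ∃ v : ι → ℝ, (∀ i ∉ F, v i = 0) ∧ ∑ i ∈ F, v i = 0 ∧ ∑ i ∈ F, v i • x i = 0 ∧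
      ∃ i ∈ F, v i ≠ 0 := by
  classical
  have hdep : ¬ LinearIndepOn ℝ (fun i => ((1 : ℝ), x i)) (F : Set ι) := fun hli => by
    have := hli.fintype_card_le_finrank
    simp [Module.finrank_prod] at this
    omega
  obtain ⟨v, hv, i, hi, hvi⟩ := not_linearIndepOn_finset_iff.1 hdep
  refine ⟨fun i => if i ∈ F then v i else 0, fun i hi => if_neg hi, ?_, ?_, i, hi, by simpa [hi]⟩
  · simpa [Prod.fst_sum, sum_ite_mem] using congrArg Prod.fst hv
  · simpa [Prod.snd_sum, ite_smul, sum_ite_mem] using congrArg Prod.snd hv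

namespace steinitzPolytope

variable {x : ι → E} {A : Finset ι} {d : ℝ} {c : ι → ℝ}

theorem isCompact [Fintype ι] : IsCompact (steinitzPolytope x A d) := by
  have hbox : steinitzPolytope x A d ⊆ Set.Icc 0 1 := fun c ⟨hc₀, hc₁, _⟩ => by
    refine ⟨fun i => ?_, fun i => ?_⟩ <;> by_cases hi : i ∈ A <;>
      simp [hc₀ i, (hc₁ i _).1, (hc₁ i _).2, hi]
  refine isCompact_Icc.of_isClosed_subset ?_ hbox
  have hker : {c : ι → ℝ | ∑ i ∈ A, c i • x i = 0} =
      LinearMap.ker (∑ i ∈ A, (LinearMap.proj i : (ι → ℝ) →ₗ[ℝ] ℝ).smulRight (x i)) := by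
    ext c; simp
  have hclosed : IsClosed {c : ι → ℝ | ∑ i ∈ A, c i • x i = 0} :=
    hker ▸ Submodule.closed_of_finiteDimensional _
  have hsupp : IsClosed {c : ι → ℝ | ∀ i ∉ A, c i = 0} := by
    simp only [Set.ofPred_forall]
    exact isClosed_iInter fun i => isClosed_iInter fun _ =>
      isClosed_eq (continuous_apply i) continuous_const
  have hunit : IsClosed {c : ι → ℝ | ∀ i ∈ A, c i ∈ Set.Icc 0 1} := by
    simp only [Set.ofPred_forall]
    exact isClosed_iInter fun i => isClosed_iInter fun _ =>
      isClosed_Icc.preimage (continuous_apply i)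
  have hmass : IsClosed {c : ι → ℝ | ∑ i ∈ A, c i = d} :=
    isClosed_eq (continuous_finsetSum _ fun i _ => continuous_apply i) continuous_const
  exact hsupp.inter (hunit.inter (hmass.inter hclosed))

theorem smul_mem (hc : c ∈ steinitzPolytope x A d) {t : ℝ} (ht₀ : 0 ≤ t) (ht₁ : t ≤ 1) :
    t • c ∈ steinitzPolytope x A (t * d) := by
  obtain ⟨hc₀, hc₁, hcd, hcx⟩ := hc
  refine ⟨fun i hi => by simp [hc₀ i hi], fun i hi => ?_, ?_, ?_⟩
  · obtain ⟨h0, h1⟩ := hc₁ i hi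
    exact ⟨mul_nonneg ht₀ h0, by simpa using mul_le_one₀ ht₁ h0 h1⟩
  · simp [← mul_sum, hcd]
  · simp [mul_smul, ← smul_sum, hcx]

theorem nonempty_of_le {d' : ℝ} (hne : (steinitzPolytope x A d).Nonempty) (hd'₀ : 0 ≤ d')
    (hd' : d' ≤ d) : (steinitzPolytope x A d').Nonempty := by
  obtain ⟨c, hc⟩ := hne
  rcases hd'.lt_or_eq with hlt | rfl
  · have hd : 0 < d := hd'₀.trans_lt hlt
    refine ⟨(d' / d) • c, ?_⟩
    simpa [div_mul_cancel₀ _ hd.ne'] using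
      smul_mem hc (div_nonneg hd'₀ hd.le) (div_le_one_of_le₀ hd' hd.le)
  · exact ⟨c, hc⟩

theorem mem_erase [DecidableEq ι] (hc : c ∈ steinitzPolytope x A d) {i : ι} (hi : c i = 0) :
    c ∈ steinitzPolytope x (A.erase i) d := by
  obtain ⟨hc₀, hc₁, hcd, hcx⟩ := hc
  refine ⟨fun j hj => ?_, fun j hj => hc₁ j (Finset.mem_of_mem_erase hj), ?_, ?_⟩
  · by_cases hji : j = i
    · exact hji ▸ hi
    · exact hc₀ j fun h => hj (Finset.mem_erase.2 ⟨hji, h⟩)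
  · rwa [sum_erase _ hi]
  · rwa [sum_erase _ (by rw [hi, zero_smul])]

theorem seminorm_sum_le (p : Seminorm ℝ E) (hx : ∀ i ∈ A, p (x i) ≤ 1)
    (hc : c ∈ steinitzPolytope x A d) :
    p (∑ i ∈ A, x i) ≤ #A - d := by
  obtain ⟨-, hc₁, hcd, hcx⟩ := hc
  have hrewrite : ∑ i ∈ A, x i = ∑ i ∈ A, (1 - c i) • x i := by
    simp [sub_smul, sum_sub_distrib, hcx]
  calc p (∑ i ∈ A, x i) ≤ ∑ i ∈ A, p ((1 - c i) • x i) :=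
        hrewrite ▸ Finset.le_sum_of_subadditive p (map_zero p).le (map_add_le_add p) _ _
    _ ≤ ∑ i ∈ A, (1 - c i) := sum_le_sum fun i hi => by
        rw [map_smul_eq_mul, Real.norm_of_nonneg (sub_nonneg.2 (hc₁ i hi).2)]
        exact mul_le_of_le_one_right (sub_nonneg.2 (hc₁ i hi).2) (hx i hi)
    _ = #A - d := by simp [sum_sub_distrib, hcd]

open Filter Topology in
theorem eventually_add_smul_mem {v : ι → ℝ} (hc : c ∈ steinitzPolytope x A d)
    (hv : ∀ i, v i ≠ 0 → i ∈ A ∧ c i ∈ Set.Ioo 0 1)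
    (hv₀ : ∑ i ∈ A, v i = 0) (hvx : ∑ i ∈ A, v i • x i = 0) :
    ∀ᶠ t in 𝓝 (0 : ℝ), c + t • v ∈ steinitzPolytope x A d := by
  obtain ⟨hc₀, hc₁, hcd, hcx⟩ := hc
  have hopen : IsOpen {c' : ι → ℝ | ∀ i ∈ A, c i ∈ Set.Ioo 0 1 → c' i ∈ Set.Ioo 0 1} := by
    simp only [Set.ofPred_forall]
    exact isOpen_biInter_finset fun i _ => isOpen_iInter_of_finite fun _ =>
      isOpen_Ioo.preimage (continuous_apply i)
  have hcont : Continuous fun t : ℝ => c + t • v := by fun_prop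
  filter_upwards [hcont.continuousAt.preimage_mem_nhds (hopen.mem_nhds (by simp +contextual))]
    with t ht
  refine ⟨fun i hi => ?_, fun i hi => ?_, ?_, ?_⟩
  · have : v i = 0 := by_contra fun h => hi (hv i h).1
    simp [hc₀ i hi, this]
  · by_cases hvi : v i = 0
    · simpa [hvi] using hc₁ i hi
    · exact Set.Ioo_subset_Icc_self (ht i hi (hv i hvi).2)
  · simp [sum_add_distrib, ← mul_sum, hcd, hv₀]
  · simp [add_smul, sum_add_distrib, mul_smul, ← smul_sum, hcx, hvx]

variable [FiniteDimensional ℝ E]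

theorem card_filter_mem_Ioo_le (hc : c ∈ (steinitzPolytope x A d).extremePoints ℝ) :
    #{i ∈ A | c i ∈ Set.Ioo 0 1} ≤ finrank ℝ E + 1 := by
  by_contra! hF
  obtain ⟨v, hvF, hv₀, hvx, j, hj, hvj⟩ := exists_nontrivial_affine_relation x hF
  have hv : ∀ i, v i ≠ 0 → i ∈ A ∧ c i ∈ Set.Ioo 0 1 := fun i hi =>
    mem_filter.1 (by_contra fun h => hi (hvF i h))
  have hpert := eventually_add_smul_mem hc.1 hv
    (by rwa [← sum_subset (filter_subset _ A) fun i _ hi => hvF i hi])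
    (by rwa [← sum_subset (filter_subset _ A) fun i _ hi => by rw [hvF i hi, zero_smul]])
  obtain ⟨t, ⟨hplus, hminus⟩, ht⟩ :=
    ((hpert.and ((continuous_neg.tendsto' 0 0 neg_zero).eventually hpert)).filter_mono
      nhdsWithin_le_nhds |>.and (eventually_mem_nhdsWithin (s := {0}ᶜ))).exists
  have hmid : c ∈ openSegment ℝ (c + (-t) • v) (c + t • v) :=
    ⟨1 / 2, 1 / 2, by norm_num, by norm_num, by norm_num, by module⟩
  have hfix := ((mem_extremePoints.1 hc).2 _ hminus _ hplus hmid).2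
  exact hvj ((smul_eq_zero.1 (congrFun (add_eq_left.1 hfix) j)).resolve_left ht)

theorem exists_eq_zero_of_mem_extremePoints
    (hc : c ∈ (steinitzPolytope x A d).extremePoints ℝ) (hd : d + finrank ℝ E + 1 ≤ #A) :
    ∃ i ∈ A, c i = 0 := by
  by_contra! hne
  obtain ⟨-, hc₁, hcd, -⟩ := hc.1
  set F := {i ∈ A | c i ∈ Set.Ioo 0 1}
  have hone : ∀ i ∈ {i ∈ A | c i ∉ Set.Ioo 0 1}, c i = 1 := fun i hi => by
    obtain ⟨hiA, hi⟩ := mem_filter.1 hi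
    obtain ⟨h0, h1⟩ := hc₁ i hiA
    exact le_antisymm h1 (not_lt.1 fun h => hi ⟨h0.lt_of_ne (hne i hiA).symm, h⟩)
  have hsplit : d = ∑ i ∈ F, c i + (#A - #F) := by
    have hcard := card_filter_add_card_filter_not (s := A) (fun i => c i ∈ Set.Ioo 0 1)
    rw [← hcd, ← sum_filter_add_sum_filter_not A (fun i => c i ∈ Set.Ioo 0 1),
      sum_congr rfl hone, sum_const, nsmul_one, ← hcard]
    push_cast
    ring
  have hF : (#F : ℝ) ≤ finrank ℝ E + 1 := mod_cast card_filter_mem_Ioo_le hc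
  rcases F.eq_empty_or_nonempty with hempty | hnonempty
  · simp only [hempty, sum_empty, card_empty, Nat.cast_zero] at hsplit
    linarith
  · have := sum_pos (fun i hi => (mem_filter.1 hi).2.1) hnonempty
    linarith

theorem exists_erase_nonempty [Fintype ι] [DecidableEq ι]
    (hne : (steinitzPolytope x A d).Nonempty) (hd : d + finrank ℝ E + 1 ≤ #A) :
    ∃ i ∈ A, (steinitzPolytope x (A.erase i) d).Nonempty := by
  obtain ⟨c, hc⟩ := isCompact.extremePoints_nonempty hne
  obtain ⟨i, hi, hci⟩ := exists_eq_zero_of_mem_extremePoints hc hd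
  exact ⟨i, hi, c, mem_erase hc.1 hci⟩

end steinitzPolytope

theorem Seminorm.map_list_sum_le_length (p : Seminorm ℝ E) {x : ι → E} {l : List ι}
    (hx : ∀ i ∈ l, p (x i) ≤ 1) : p (l.map x).sum ≤ l.length := by
  induction l with
  | nil => simp
  | cons a l ih =>
    simp only [List.map_cons, List.sum_cons, List.length_cons, Nat.cast_succ]
    have := ih fun i hi => hx i (List.mem_cons_of_mem a hi)
    linarith [map_add_le_add p (x a) (l.map x).sum, hx a List.mem_cons_self]

theorem exists_list_seminorm_sum_take_le [Fintype ι] [DecidableEq ι] [FiniteDimensional ℝ E]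
    (p : Seminorm ℝ E) {x : ι → E} (hx : ∀ i, p (x i) ≤ 1) (A : Finset ι) {d : ℝ}
    (hne : (steinitzPolytope x A d).Nonempty) (hd : #A - finrank ℝ E ≤ d) :
    ∃ l : List ι, l.Nodup ∧ l.toFinset = A ∧ ∀ k, p ((l.take k).map x).sum ≤ finrank ℝ E := by
  induction A using Finset.strongInduction generalizing d with
  | H A ih =>
    by_cases hsmall : #A ≤ finrank ℝ E
    · refine ⟨A.toList, nodup_toList A, toList_toFinset A, fun k => ?_⟩
      refine (p.map_list_sum_le_length fun i _ => hx i).trans ?_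
      have := (List.length_take_le' k A.toList).trans_eq (length_toList A)
      exact_mod_cast this.trans hsmall
    have hA : (finrank ℝ E : ℝ) + 1 ≤ #A := by exact_mod_cast not_le.1 hsmall
    obtain ⟨i, hi, hne'⟩ := steinitzPolytope.exists_erase_nonempty
      (steinitzPolytope.nonempty_of_le (d' := #A - finrank ℝ E - 1) hne (by linarith) (by linarith))
      (by linarith)
    obtain ⟨l, hl, hlA, hlk⟩ := ih _ (erase_ssubset hi) hne'
      (by rw [card_erase_of_mem hi, Nat.cast_pred (card_pos.2 ⟨i, hi⟩)]; linarith)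
    have hil : i ∉ l := by simp [← List.mem_toFinset, hlA]
    have hnodup : (l ++ [i]).Nodup :=
      hl.append (List.nodup_singleton i) (List.disjoint_singleton.2 hil)
    have hfinset : (l ++ [i]).toFinset = A := by simp [hlA, insert_erase hi]
    refine ⟨l ++ [i], hnodup, hfinset, fun k => ?_⟩
    by_cases hk : k ≤ l.length
    · rw [List.take_append_of_le_length hk]
      exact hlk k
    · rw [List.take_of_length_le (by simp; omega), ← List.sum_toFinset x hnodup, hfinset]
      obtain ⟨c, hc⟩ := hne
      have := steinitzPolytope.seminorm_sum_le p (fun i _ => hx i) hc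
      linarith

theorem List.Nodup.exists_perm_sum_filter_lt {M : Type*} [AddCommMonoid M] {n : ℕ}
    {l : List (Fin n)} (hl : l.Nodup) (hmem : ∀ i, i ∈ l) (f : Fin n → M) :
    ∃ π : Equiv.Perm (Fin n), ∀ k, ∑ j with j.val < k, f (π j) = ((l.take k).map f).sum := by
  have hlen : l.length = n := by
    simpa using Fintype.card_congr (hl.getEquivOfForallMemList l hmem)
  refine ⟨(finCongr hlen).symm.trans (hl.getEquivOfForallMemList l hmem), fun k => ?_⟩
  rw [← List.sum_take_ofFn, List.map_take]
  congr 2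
  apply List.ext_get <;> simp [hlen]

theorem steinitz_lemma_general
    (r n : ℕ)
    (N : (Fin r → ℝ) → ℝ)
    (hN_add : ∀ x y, N (x + y) ≤ N x + N y)
    (hN_smul : ∀ (c : ℝ) (x), N (c • x) = |c| * N x)
    (x : Fin n → Fin r → ℝ)
    (hsum : ∑ i, x i = 0)
    (hnorm : ∀ i, N (x i) ≤ 1) :
    ∃ π : Equiv.Perm (Fin n), ∀ k : ℕ, k ≤ n →
      N (∑ j ∈ Finset.filter (fun j : Fin n => (j : ℕ) < k) Finset.univ, x (π j)) ≤ r := by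
  let p : Seminorm ℝ (Fin r → ℝ) := Seminorm.of N hN_add (by simpa only [Real.norm_eq_abs])
  have hone : (fun _ => 1) ∈ steinitzPolytope x univ n :=
    ⟨by simp, by simp, by simp, by simpa using hsum⟩
  obtain ⟨l, hl, hlA, hlk⟩ :=
    exists_list_seminorm_sum_take_le p hnorm univ ⟨_, hone⟩ (by simp)
  obtain ⟨π, hπ⟩ := hl.exists_perm_sum_filter_lt (by simp [← List.mem_toFinset, hlA]) x
  rw [finrank_fin_fun] at hlk
  exact ⟨π, fun k _ => (hπ k).symm ▸ hlk k⟩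

/-- **Steinitz lemma with constant `r`.** For any norm `N` on `ℝ^r`
and vectors `x₁,…,xₙ` of norm at most `1` summing to `0`, there is a permutation
such that every partial sum has norm at most `r`. -/
theorem steinitz_lemma
    (r n : ℕ)
    (N : (Fin r → ℝ) → ℝ)
    (hN_add : ∀ x y, N (x + y) ≤ N x + N y)
    (hN_smul : ∀ (c : ℝ) (x), N (c • x) = |c| * N x)
    (hN_def : ∀ x, N x = 0 → x = 0)
    (x : Fin n → Fin r → ℝ)
    (hsum : ∑ i, x i = 0)
    (hnorm : ∀ i, N (x i) ≤ 1) :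
    ∃ π : Equiv.Perm (Fin n), ∀ k : ℕ, k ≤ n →
      N (∑ j ∈ Finset.filter (fun j : Fin n => (j : ℕ) < k) Finset.univ, x (π j)) ≤ r :=
  steinitz_lemma_general r n N hN_add hN_smul x hsum hnorm
end

section
/- Let D > 0 and let v_1,…,v_m ∈ ℝ^r with ‖v_i‖_∞ ≤ D for all i, and set u = Σ_{i=1}^m v_i. Then there exists a permutation π of {1,…,m} such that for every k ∈ {1,…,m}, the ℓ∞-distance of the partial sum Σ_{j=1}^k v_{π(j)} to the line segment {t·u : t ∈ [0,1]} is at most r·D. -/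
/-!
Grinberg–Sevast'yanov's argument. Let `r = dim E` and `u = ∑ i, v i`. Weights on a set `B`
of at least `r` indices are a `μ ∈ [0,1]^B` with `∑ μ i = #B - r` and `∑ μ i • v i = t • u`
for some `t ∈ [0,1]`. Then `∑_B v i - t • u = ∑_B (1 - μ i) • v i` has norm at most `r D`.
All indices carry the constant weights `μ = t = 1 - r/m`. Given weights on `B` with
`#B > r`, scale `μ` and `t` by `(#B - 1 - r)/(#B - r)` and move to a vertex of the polytope
they then range over: it is cut out by `r + 1` equations, so at most `r + 1` of the
coordinates `(μ, t)` are fractional, and with `∑ (1 - μ i) = r + 1` this forces some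
`μ j = 0`; so `B \ {j}` carries weights. Deleting indices one at a time from the whole set
and reading the deletions backwards gives the permutation; prefixes of at most `r` indices
are trivially within `r D` of `0`.
-/

open Finset Filter Topology Module

section CubeVertex

variable {ι E : Type*} [Fintype ι] [AddCommGroup E] [Module ℝ E]

theorem eq_zero_of_mem_extremePoints_cube_inter (A : (ι → ℝ) →ₗ[ℝ] E) {b : E}
    {y δ : ι → ℝ} (hy : y ∈ (Set.Icc 0 1 ∩ A ⁻¹' {b}).extremePoints ℝ) (hδ : A δ = 0)
    (hsupp : ∀ i, y i ∉ Set.Ioo 0 1 → δ i = 0) : δ = 0 := by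
  obtain ⟨⟨hy01, hyb⟩, hext⟩ := mem_extremePoints.1 hy
  have hev : ∀ᶠ s in 𝓝 (0 : ℝ), ∀ i, y i ∈ Set.Ioo 0 1 → y i + s * δ i ∈ Set.Ioo 0 1 := by
    refine eventually_all.2 fun i => ?_
    by_cases hi : y i ∈ Set.Ioo 0 1
    · have hlim : Tendsto (fun s : ℝ => y i + s * δ i) (𝓝 0) (𝓝 (y i)) := by
        simpa using ((continuous_id.mul continuous_const).const_add (y i)).tendsto' 0 _ (by simp)
      exact (hlim.eventually (Ioo_mem_nhds hi.1 hi.2)).mono fun s hs _ => hs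
    · exact .of_forall fun s h => absurd h hi
  -- `y ± s • δ` stays in the polytope for small `s`, and `y` is their midpoint.
  obtain ⟨ε, hε, hball⟩ := Metric.eventually_nhds_iff.1 hev
  have hmem : ∀ s : ℝ, |s| < ε → y + s • δ ∈ Set.Icc 0 1 ∩ A ⁻¹' {b} := by
    intro s hs
    have hcoord : ∀ i, y i + s * δ i ∈ Set.Icc 0 1 := fun i => by
      by_cases hi : y i ∈ Set.Ioo 0 1
      · exact Set.Ioo_subset_Icc_self (hball (by simpa using hs) i hi)
      · simpa [hsupp i hi] using (⟨hy01.1 i, hy01.2 i⟩ : y i ∈ Set.Icc 0 1)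
    exact ⟨⟨fun i => (hcoord i).1, fun i => (hcoord i).2⟩, by simpa [hδ] using hyb⟩
  have hseg : y ∈ openSegment ℝ (y + (-(ε / 2)) • δ) (y + (ε / 2) • δ) :=
    ⟨1 / 2, 1 / 2, by norm_num, by norm_num, by norm_num, by module⟩
  have h := (hext _ (hmem _ (by rw [abs_neg, abs_of_pos (half_pos hε)]; linarith)) _
    (hmem _ (by rw [abs_of_pos (half_pos hε)]; linarith)) hseg).2
  simpa [hε.ne'] using h

theorem exists_mem_cube_card_Ioo_le_finrank [FiniteDimensional ℝ E] (A : (ι → ℝ) →ₗ[ℝ] E)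
    {x : ι → ℝ} (hx : x ∈ Set.Icc 0 1) :
    ∃ y ∈ Set.Icc (0 : ι → ℝ) 1, A y = A x ∧ #{i | y i ∈ Set.Ioo 0 1} ≤ finrank ℝ E := by
  have hclosed : IsClosed (A ⁻¹' {A x}) := by
    have : A ⁻¹' {A x} = (· - x) ⁻¹' A.ker := by ext z; simp [sub_eq_zero]
    rw [this]
    exact A.ker.closed_of_finiteDimensional.preimage (continuous_id.sub continuous_const)
  obtain ⟨y, hy⟩ := (isCompact_Icc.inter_right hclosed).extremePoints_nonempty ⟨x, hx, rfl⟩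
  refine ⟨y, hy.1.1, hy.1.2, ?_⟩
  let L := A ∘ₗ Function.ExtendByZero.linearMap ℝ (Subtype.val : {i // y i ∈ Set.Ioo 0 1} → ι)
  have hL : Function.Injective L := by
    refine (injective_iff_map_eq_zero L).2 fun c hc => ?_
    have h0 := eq_zero_of_mem_extremePoints_cube_inter A hy hc fun i hi =>
      Function.extend_apply' _ _ _ fun ⟨j, hj⟩ => hi (hj ▸ j.2)
    funext j
    simpa [Subtype.val_injective.extend_apply] using congrFun h0 j
  simpa [Fintype.card_subtype] using LinearMap.finrank_le_finrank_of_injective hL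

end CubeVertex

theorem exists_eq_zero_of_sum_one_sub_eq {ι : Type*} {B : Finset ι} {μ : ι → ℝ} {n : ℕ}
    (hμ : ∀ i ∈ B, μ i ∈ Set.Icc 0 1) (hcard : #{i ∈ B | μ i ∈ Set.Ioo 0 1} ≤ n + 1)
    (hsum : ∑ i ∈ B, (1 - μ i) = n + 1) : ∃ j ∈ B, μ j = 0 := by
  by_contra! hne
  have hfrac : ∑ i ∈ B, (1 - μ i) = ∑ i ∈ B with μ i ∈ Set.Ioo 0 1, (1 - μ i) :=
    (sum_filter_of_ne fun i hi h1 =>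
      ⟨(hμ i hi).1.lt_of_ne' (hne i hi), (hμ i hi).2.lt_of_ne fun h => h1 (by simp [h])⟩).symm
  rcases eq_empty_or_nonempty {i ∈ B | μ i ∈ Set.Ioo 0 1} with hF | hF
  · rw [hfrac, hF, sum_empty] at hsum
    linarith [(n.cast_nonneg : (0 : ℝ) ≤ n)]
  · have hlt := sum_lt_sum_of_nonempty hF fun i hi =>
      (sub_lt_self_iff 1).2 (mem_filter.1 hi).2.1
    rw [sum_const, nsmul_one] at hlt
    have : (#{i ∈ B | μ i ∈ Set.Ioo 0 1} : ℝ) ≤ n + 1 := by exact_mod_cast hcard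
    linarith

section SegmentWeights

variable {ι E : Type*} [Fintype ι] [NormedAddCommGroup E] [NormedSpace ℝ E]

def HasSegmentWeights (v : ι → E) (B : Finset ι) : Prop :=
  ∃ μ ∈ Set.Icc (0 : ι → ℝ) 1, ∃ t ∈ Set.Icc (0 : ℝ) 1,
    ∑ i ∈ B, μ i = (#B : ℝ) - finrank ℝ E ∧ ∑ i ∈ B, μ i • v i = t • ∑ i, v i

theorem hasSegmentWeights_univ (v : ι → E) (h : finrank ℝ E ≤ Fintype.card ι) :
    HasSegmentWeights v univ := by
  have hr : (finrank ℝ E : ℝ) ≤ Fintype.card ι := by exact_mod_cast h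
  set ρ : ℝ := 1 - finrank ℝ E / Fintype.card ι
  have hρ : ρ ∈ Set.Icc 0 1 :=
    ⟨sub_nonneg.2 (div_le_one_of_le₀ hr (by positivity)), sub_le_self _ (by positivity)⟩
  refine ⟨fun _ => ρ, ⟨fun _ => hρ.1, fun _ => hρ.2⟩, ρ, hρ, ?_, by simp [smul_sum]⟩
  rcases (Fintype.card ι).eq_zero_or_pos with h0 | hpos
  · simp [h0, show finrank ℝ E = 0 by omega]
  · simp [ρ, mul_div_cancel₀ _ (show (Fintype.card ι : ℝ) ≠ 0 by positivity)]

theorem exists_weights_card_Ioo_le [FiniteDimensional ℝ E] (v : ι → E) (u : E) (B : Finset ι)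
    {μ : ι → ℝ} {t c : ℝ} (hμ : μ ∈ Set.Icc 0 1) (ht : t ∈ Set.Icc 0 1)
    (hsum : ∑ i ∈ B, μ i = c) (hvsum : ∑ i ∈ B, μ i • v i = t • u) :
    ∃ μ' ∈ Set.Icc (0 : ι → ℝ) 1, ∃ t' ∈ Set.Icc (0 : ℝ) 1,
      ∑ i ∈ B, μ' i = c ∧ ∑ i ∈ B, μ' i • v i = t' • u ∧
      #{i ∈ B | μ' i ∈ Set.Ioo 0 1} ≤ finrank ℝ E + 1 := by
  -- The coordinate `none` carries `t`, the coordinates `some i` carry `μ`.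
  let A : (Option ι → ℝ) →ₗ[ℝ] ℝ × E :=
    LinearMap.prod (∑ i ∈ B, LinearMap.proj (some i))
      (∑ i ∈ B, (LinearMap.proj (some i)).smulRight (v i) - (LinearMap.proj none).smulRight u)
  have hA : ∀ y, A y = (∑ i ∈ B, y (some i), ∑ i ∈ B, y (some i) • v i - y none • u) := by
    intro y; simp [A]
  obtain ⟨y, hy, hAy, hcard⟩ := exists_mem_cube_card_Ioo_le_finrank A
    (x := fun o => o.elim t μ)
    ⟨fun o => by cases o; exacts [ht.1, hμ.1 _], fun o => by cases o; exacts [ht.2, hμ.2 _]⟩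
  simp only [hA, Prod.mk.injEq, Option.elim, hvsum, sub_self, sub_eq_zero] at hAy
  refine ⟨fun i => y (some i), ⟨fun i => hy.1 _, fun i => hy.2 _⟩, y none, ⟨hy.1 _, hy.2 _⟩,
    hAy.1.trans hsum, hAy.2, ?_⟩
  calc #{i ∈ B | y (some i) ∈ Set.Ioo 0 1}
      ≤ #{o | y o ∈ Set.Ioo 0 1} :=
        card_le_card_of_injOn some (fun i hi => by simp_all) (Option.some_injective _).injOn
    _ ≤ finrank ℝ (ℝ × E) := hcard
    _ = finrank ℝ E + 1 := by rw [Module.finrank_prod, Module.finrank_self, add_comm]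

theorem HasSegmentWeights.exists_erase [DecidableEq ι] [FiniteDimensional ℝ E] {v : ι → E}
    {B : Finset ι} (hB : finrank ℝ E < #B) (h : HasSegmentWeights v B) :
    ∃ j ∈ B, HasSegmentWeights v (B.erase j) := by
  obtain ⟨μ, hμ, t, ht, hsum, hvsum⟩ := h
  have hBr : (finrank ℝ E : ℝ) + 1 ≤ #B := by exact_mod_cast hB
  set ρ : ℝ := (#B - 1 - finrank ℝ E) / (#B - finrank ℝ E)
  have hρ : ρ ∈ Set.Icc 0 1 :=
    ⟨div_nonneg (by linarith) (by linarith), (div_le_one (by linarith)).2 (by linarith)⟩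
  obtain ⟨μ', hμ', t', ht', hsum', hvsum', hcard⟩ := exists_weights_card_Ioo_le v (∑ i, v i) B
    (μ := ρ • μ) (t := ρ * t) (c := #B - 1 - finrank ℝ E)
    ⟨fun i => mul_nonneg hρ.1 (hμ.1 i), fun i => unitInterval.mul_mem hρ ⟨hμ.1 i, hμ.2 i⟩ |>.2⟩
    (unitInterval.mul_mem hρ ht)
    (by simp only [Pi.smul_apply, smul_eq_mul]
        rw [← mul_sum, hsum, div_mul_cancel₀ _ (by linarith)])
    (by simp only [Pi.smul_apply, smul_eq_mul, mul_smul, ← smul_sum, hvsum])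
  obtain ⟨j, hjB, hj⟩ := exists_eq_zero_of_sum_one_sub_eq (fun i _ => ⟨hμ'.1 i, hμ'.2 i⟩) hcard
    (by rw [sum_sub_distrib, hsum', sum_const, nsmul_one]; ring)
  refine ⟨j, hjB, μ', hμ', t', ht', ?_, ?_⟩
  · rw [sum_erase B hj, hsum', card_erase_of_mem hjB, Nat.cast_sub (card_pos.2 ⟨j, hjB⟩)]
    ring
  · rw [sum_erase B (by simp [hj]), hvsum']

theorem HasSegmentWeights.exists_norm_sub_le {v : ι → E} {B : Finset ι} {D : ℝ}
    (hv : ∀ i, ‖v i‖ ≤ D) (h : HasSegmentWeights v B) :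
    ∃ τ ∈ Set.Icc (0 : ℝ) 1, ‖∑ i ∈ B, v i - τ • ∑ i, v i‖ ≤ finrank ℝ E * D := by
  obtain ⟨μ, hμ, t, ht, hsum, hvsum⟩ := h
  have hμ1 : ∀ i, μ i ≤ 1 := hμ.2
  refine ⟨t, ht, ?_⟩
  calc ‖∑ i ∈ B, v i - t • ∑ i, v i‖ = ‖∑ i ∈ B, (1 - μ i) • v i‖ := by
        simp [sub_smul, sum_sub_distrib, hvsum]
    _ ≤ ∑ i ∈ B, (1 - μ i) * D := norm_sum_le_of_le B fun i _ => by
        rw [norm_smul, Real.norm_of_nonneg (sub_nonneg.2 (hμ1 i))]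
        exact mul_le_mul_of_nonneg_left (hv i) (sub_nonneg.2 (hμ1 i))
    _ = finrank ℝ E * D := by rw [← sum_mul, sum_sub_distrib, hsum]; simp

theorem exists_norm_sub_le_of_hasSegmentWeights {v : ι → E} {B : Finset ι} {D : ℝ}
    (hD : 0 ≤ D) (hv : ∀ i, ‖v i‖ ≤ D) (h : finrank ℝ E ≤ #B → HasSegmentWeights v B) :
    ∃ τ ∈ Set.Icc (0 : ℝ) 1, ‖∑ i ∈ B, v i - τ • ∑ i, v i‖ ≤ finrank ℝ E * D := by
  rcases le_or_gt (finrank ℝ E) #B with hB | hB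
  · exact (h hB).exists_norm_sub_le hv
  refine ⟨0, ⟨le_rfl, zero_le_one⟩, ?_⟩
  calc ‖∑ i ∈ B, v i - (0 : ℝ) • ∑ i, v i‖ ≤ #B • D := by
        simpa using norm_sum_le_of_le B fun i _ => hv i
    _ ≤ finrank ℝ E * D := by
        rw [nsmul_eq_mul]; exact mul_le_mul_of_nonneg_right (by exact_mod_cast hB.le) hD

end SegmentWeights

theorem exists_list_forall_take_of_exists_erase {α : Type*} [DecidableEq α]
    (P : Finset α → Prop) (hP : ∀ B, P B → B.Nonempty → ∃ j ∈ B, P (B.erase j))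
    {B : Finset α} (hB : P B) :
    ∃ l : List α, l.Nodup ∧ l.toFinset = B ∧ ∀ k, P (l.take k).toFinset := by
  induction B using Finset.strongInduction with
  | H B ih =>
    rcases B.eq_empty_or_nonempty with rfl | hne
    · exact ⟨[], List.nodup_nil, rfl, fun k => by simpa using hB⟩
    obtain ⟨j, hjB, hj⟩ := hP B hB hne
    obtain ⟨l, hl, hlB, hlk⟩ := ih _ (erase_ssubset hjB) hj
    have hjl : j ∉ l := by simp [← List.mem_toFinset, hlB]
    refine ⟨l ++ [j], hl.append (List.nodup_singleton j) (by simpa using hjl),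
      by simp [hlB, insert_erase hjB], fun k => ?_⟩
    rcases le_or_gt k l.length with hk | hk
    · simpa [List.take_append_of_le_length hk] using hlk k
    · simpa [List.take_of_length_le (by simpa using hk : (l ++ [j]).length ≤ k), hlB,
        insert_erase hjB] using hB

theorem List.Nodup.exists_perm_image_filter_lt {m : ℕ} {l : List (Fin m)} (hl : l.Nodup)
    (hmem : ∀ x, x ∈ l) :
    ∃ π : Equiv.Perm (Fin m),
      ∀ k, (univ.filter fun j : Fin m => (j : ℕ) < k).image π = (l.take k).toFinset := by
  have hlen : l.length = m := by
    simpa [List.toFinset_card_of_nodup hl] using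
      congrArg card (eq_univ_of_forall fun x => List.mem_toFinset.2 (hmem x))
  refine ⟨(finCongr hlen.symm).trans (hl.getEquivOfForallMemList _ hmem), fun k => ?_⟩
  ext x
  simp only [Equiv.coe_trans, mem_image, Finset.mem_filter, mem_univ, true_and, Function.comp_apply,
    finCongr_apply, getEquivOfForallMemList_apply, get_eq_getElem, Fin.val_cast, mem_toFinset,
    mem_take_iff_getElem, lt_inf_iff]
  exact ⟨fun ⟨a, hak, ha⟩ => ⟨a, ⟨hak, hlen.symm ▸ a.2⟩, ha⟩,
    fun ⟨j, hj, hjx⟩ => ⟨⟨j, hlen ▸ hj.2⟩, hj.1, hjx⟩⟩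

theorem exists_perm_forall_image_filter_lt_of_exists_erase {m : ℕ} (P : Finset (Fin m) → Prop)
    (hP : ∀ B, P B → B.Nonempty → ∃ j ∈ B, P (B.erase j)) (huniv : P univ) :
    ∃ π : Equiv.Perm (Fin m), ∀ k, P ((univ.filter fun j : Fin m => (j : ℕ) < k).image π) := by
  obtain ⟨l, hl, hlu, hlk⟩ := exists_list_forall_take_of_exists_erase P hP huniv
  obtain ⟨π, hπ⟩ := hl.exists_perm_image_filter_lt fun x => by simp [← List.mem_toFinset, hlu]
  exact ⟨π, fun k => hπ k ▸ hlk k⟩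

theorem exists_perm_norm_sum_filter_lt_sub_smul_le {E : Type*} [NormedAddCommGroup E]
    [NormedSpace ℝ E] [FiniteDimensional ℝ E] {m : ℕ} (v : Fin m → E) {D : ℝ} (hD : 0 ≤ D)
    (hv : ∀ i, ‖v i‖ ≤ D) :
    ∃ π : Equiv.Perm (Fin m), ∀ k, ∃ τ ∈ Set.Icc (0 : ℝ) 1,
      ‖∑ j ∈ univ.filter (fun j : Fin m => (j : ℕ) < k), v (π j) - τ • ∑ i, v i‖ ≤
        finrank ℝ E * D := by
  obtain ⟨π, hπ⟩ := exists_perm_forall_image_filter_lt_of_exists_erase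
    (fun B => finrank ℝ E ≤ #B → HasSegmentWeights v B)
    (fun B hB hne => by
      rcases lt_or_ge (finrank ℝ E) #B with hlt | hle
      · obtain ⟨j, hjB, hj⟩ := (hB hlt.le).exists_erase hlt
        exact ⟨j, hjB, fun _ => hj⟩
      · obtain ⟨j, hjB⟩ := hne
        exact ⟨j, hjB, fun h => absurd (card_erase_lt_of_mem hjB) (by omega)⟩)
    (fun h => hasSegmentWeights_univ v (by simpa using h))
  refine ⟨π, fun k => ?_⟩
  rw [← sum_image fun _ _ _ _ h => π.injective h]
  exact exists_norm_sub_le_of_hasSegmentWeights hD hv (hπ k)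

/-- Vectors of `ℓ∞`-norm at most `D` summing to `u` can be
rearranged so that every partial sum is within `ℓ∞`-distance `r·D` of the line
segment from `0` to `u`. -/
theorem steinitz_rearrangement_along_segment
    (r m : ℕ) (D : ℝ) (hD : 0 < D)
    (v : Fin m → Fin r → ℝ)
    (hv : ∀ i k, |v i k| ≤ D)
    (u : Fin r → ℝ) (hu : u = ∑ i, v i) :
    ∃ π : Equiv.Perm (Fin m), ∀ k : ℕ, 1 ≤ k → k ≤ m →
      ∃ τ ∈ Set.Icc (0 : ℝ) 1, ∀ l : Fin r,
        |(∑ j ∈ Finset.filter (fun j : Fin m => (j : ℕ) < k) Finset.univ, v (π j)) l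
          - τ * u l| ≤ r * D := by
  obtain ⟨π, hπ⟩ := exists_perm_norm_sum_filter_lt_sub_smul_le v hD.le
    fun i => (pi_norm_le_iff_of_nonneg hD.le).2 fun l => (Real.norm_eq_abs _).trans_le (hv i l)
  refine ⟨π, fun k _ _ => ?_⟩
  obtain ⟨τ, hτ, hnorm⟩ := hπ k
  refine ⟨τ, hτ, fun l => ?_⟩
  rw [Module.finrank_fin_fun, ← hu] at hnorm
  simpa using (norm_le_pi_norm _ l).trans hnorm
end

section
/- Let u ∈ ℤ^r and let R be a positive integer. Then the number of integer points z ∈ ℤ^r whose ℓ∞-distance to the line segment {t·u : t ∈ [0,1]} is at most R is at most (‖u‖₁ + 1)·(2R + 1)^r. -/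
open Finset

/-!
The floors `⌊τ u⌋`, `τ ∈ [0, 1]`, form a lattice path from `0` to `u` along which every coordinate
moves monotonically away from `0`; hence the `ℓ¹`-norm is injective on it and the path has at most
`‖u‖₁ + 1` points. An integer point at `ℓ∞`-distance `≤ R` from `τ u` differs from `⌊τ u⌋` by a
vector in the box `[-R, R]^r`, so the set in question lies in the sumset of the path and that box.
-/

open scoped Pointwise

section

variable {ι : Type*}

lemma floor_mul_mem_uIcc (u : ℤ) {s t : ℝ} (hs : 0 ≤ s) (hst : s ≤ t) :
    ⌊s * u⌋ ∈ Set.uIcc 0 ⌊t * u⌋ := by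
  rcases le_total 0 u with hu | hu
  · have hu' : (0 : ℝ) ≤ u := by exact_mod_cast hu
    exact Set.mem_uIcc_of_le (Int.floor_nonneg.mpr (mul_nonneg hs hu'))
      (Int.floor_mono (mul_le_mul_of_nonneg_right hst hu'))
  · have hu' : (u : ℝ) ≤ 0 := by exact_mod_cast hu
    exact Set.mem_uIcc_of_ge (Int.floor_mono (mul_le_mul_of_nonpos_right hst hu'))
      (Int.floor_nonpos (mul_nonpos_of_nonneg_of_nonpos hs hu'))

lemma natAbs_floor_mul_le (u : ℤ) {τ : ℝ} (h0 : 0 ≤ τ) (h1 : τ ≤ 1) :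
    ⌊τ * u⌋.natAbs ≤ u.natAbs := by
  have h := floor_mul_mem_uIcc u h0 h1
  rw [one_mul, Int.floor_intCast, Set.mem_uIcc] at h
  omega

lemma sub_floor_mem_Icc {z : ℤ} {x : ℝ} {R : ℕ} (h : |(z : ℝ) - x| ≤ R) :
    z - ⌊x⌋ ∈ Set.Icc (-(R : ℤ)) R := by
  obtain ⟨hlo, hhi⟩ := abs_le.mp h
  have hfloor := Int.floor_le x
  have hfloor' := Int.lt_floor_add_one x
  have hlo' : (-(R : ℤ) : ℝ) ≤ (z - ⌊x⌋ : ℤ) := by push_cast; linarith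
  have hhi' : ((z - ⌊x⌋ : ℤ) : ℝ) < (R : ℤ) + 1 := by push_cast; linarith
  exact ⟨by exact_mod_cast hlo', Int.lt_add_one_iff.mp (by exact_mod_cast hhi')⟩

def floorSegment (u : ι → ℤ) : Set (ι → ℤ) :=
  (fun τ : ℝ => fun k => ⌊τ * u k⌋) '' Set.Icc 0 1

lemma mem_floorSegment_add_Icc {u z : ι → ℤ} {R : ℕ} {τ : ℝ} (hτ : τ ∈ Set.Icc 0 1)
    (hz : ∀ k, |(z k : ℝ) - τ * u k| ≤ R) :
    z ∈ floorSegment u + Set.Icc (fun _ => -(R : ℤ)) (fun _ => (R : ℤ)) :=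
  Set.mem_add.mpr ⟨_, ⟨τ, hτ, rfl⟩, fun k => z k - ⌊τ * u k⌋,
    ⟨fun k => (sub_floor_mem_Icc (hz k)).1, fun k => (sub_floor_mem_Icc (hz k)).2⟩,
    by funext k; simp⟩

variable [Fintype ι]

lemma injOn_sum_natAbs_floorSegment (u : ι → ℤ) :
    Set.InjOn (fun p : ι → ℤ => ∑ k, (p k).natAbs) (floorSegment u) := by
  suffices key : ∀ s t : ℝ, 0 ≤ s → s ≤ t →
      ∑ k, ⌊s * u k⌋.natAbs = ∑ k, ⌊t * u k⌋.natAbs → ∀ k, ⌊s * u k⌋ = ⌊t * u k⌋ by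
    rintro _ ⟨s, ⟨hs, -⟩, rfl⟩ _ ⟨t, ⟨ht, -⟩, rfl⟩ hsum
    funext k
    rcases le_total s t with hst | hts
    · exact key s t hs hst hsum k
    · exact (key t s ht hts hsum.symm k).symm
  intro s t hs hst hsum k
  have between := fun k => Set.mem_uIcc.mp (floor_mul_mem_uIcc (u k) hs hst)
  have hle : ∀ k ∈ univ, ⌊s * u k⌋.natAbs ≤ ⌊t * u k⌋.natAbs := fun k _ => by
    have := between k; omega
  have heq := (sum_eq_sum_iff_of_le hle).mp hsum k (mem_univ k)
  have := between k
  omega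

lemma sum_natAbs_le_of_mem_floorSegment {u p : ι → ℤ} (hp : p ∈ floorSegment u) :
    ∑ k, (p k).natAbs ≤ ∑ k, (u k).natAbs := by
  obtain ⟨τ, ⟨h0, h1⟩, rfl⟩ := hp
  exact sum_le_sum fun k _ => natAbs_floor_mul_le (u k) h0 h1

lemma floorSegment_finite (u : ι → ℤ) : (floorSegment u).Finite :=
  (Set.finite_Iic _).of_injOn (fun _ => sum_natAbs_le_of_mem_floorSegment)
    (injOn_sum_natAbs_floorSegment u)

lemma ncard_floorSegment_le (u : ι → ℤ) :
    (floorSegment u).ncard ≤ ∑ k, (u k).natAbs + 1 := by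
  calc (floorSegment u).ncard ≤ (Set.Iic (∑ k, (u k).natAbs)).ncard :=
        Set.ncard_le_ncard_of_injOn _ (fun _ => sum_natAbs_le_of_mem_floorSegment)
          (injOn_sum_natAbs_floorSegment u) (Set.finite_Iic _)
    _ = ∑ k, (u k).natAbs + 1 := by
        rw [← coe_Iic, Set.ncard_coe_finset, Nat.card_Iic]

lemma ncard_Icc_const [DecidableEq ι] (R : ℕ) :
    (Set.Icc (fun _ : ι => -(R : ℤ)) (fun _ => (R : ℤ))).ncard = (2 * R + 1) ^ Fintype.card ι := by
  rw [← coe_Icc, Set.ncard_coe_finset, Pi.card_Icc, prod_const, Int.card_Icc, card_univ]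
  congr 1
  omega

end

theorem lattice_points_near_segment_general
    (r : ℕ) (u : Fin r → ℤ) (R : ℕ) :
    {z : Fin r → ℤ | ∃ τ ∈ Set.Icc (0 : ℝ) 1,
        ∀ k, |(z k : ℝ) - τ * (u k : ℝ)| ≤ (R : ℝ)}.Finite ∧
      {z : Fin r → ℤ | ∃ τ ∈ Set.Icc (0 : ℝ) 1,
        ∀ k, |(z k : ℝ) - τ * (u k : ℝ)| ≤ (R : ℝ)}.ncard ≤
        ((∑ k, (u k).natAbs) + 1) * (2 * R + 1) ^ r := by
  set box : Set (Fin r → ℤ) := Set.Icc (fun _ => -(R : ℤ)) (fun _ => (R : ℤ))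
  have hsub : {z : Fin r → ℤ | ∃ τ ∈ Set.Icc (0 : ℝ) 1,
      ∀ k, |(z k : ℝ) - τ * (u k : ℝ)| ≤ (R : ℝ)} ⊆ floorSegment u + box :=
    fun _ ⟨_, hτ, hz⟩ => mem_floorSegment_add_Icc hτ hz
  have hfin : (floorSegment u + box).Finite := (floorSegment_finite u).add (Set.finite_Icc _ _)
  refine ⟨hfin.subset hsub, ?_⟩
  calc _ ≤ (floorSegment u + box).ncard := Set.ncard_le_ncard hsub hfin
    _ ≤ (floorSegment u).ncard * box.ncard := Set.natCard_add_le
    _ ≤ _ := by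
        rw [ncard_Icc_const, Fintype.card_fin]
        gcongr
        exact ncard_floorSegment_le u

/-- The number of integer points within `ℓ∞`-distance `R` of
the line segment from `0` to `u ∈ ℤ^r` is at most `(‖u‖₁ + 1)·(2R + 1)^r`. -/
theorem lattice_points_near_segment
    (r : ℕ) (u : Fin r → ℤ) (R : ℕ) (hR : 1 ≤ R) :
    {z : Fin r → ℤ | ∃ τ ∈ Set.Icc (0 : ℝ) 1,
        ∀ k, |(z k : ℝ) - τ * (u k : ℝ)| ≤ (R : ℝ)}.Finite ∧
      {z : Fin r → ℤ | ∃ τ ∈ Set.Icc (0 : ℝ) 1,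
        ∀ k, |(z k : ℝ) - τ * (u k : ℝ)| ≤ (R : ℝ)}.ncard ≤
        ((∑ k, (u k).natAbs) + 1) * (2 * R + 1) ^ r :=
  lattice_points_near_segment_general r u R
end

section
/- Let A_i ∈ ℤ^{r×t_i} and B_i ∈ ℤ^{s_i×t_i} for i = 1,…,n, and let C be the integer matrix with columns indexed by the t_1 + ⋯ + t_n variables whose first r rows are (A_1 A_2 ⋯ A_n) and whose remaining rows form the block-diagonal matrix diag(B_1,…,B_n). Suppose every entry of every A_i has absolute value at most Δ (with Δ ≥ 1) and every Graver basis element of every B_i has ℓ1-norm at most G (with G ≥ 1). Then every Graver basis element of C has ℓ1-norm at most G·(2rGΔ + 1)^r. -/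
/-!
A Graver element `g` of `C` lies in the kernel of the block-diagonal part `D`, so it is a
sign-compatible sum `g = h₁ + ⋯ + h_N` of Graver elements of `D`. Those live on a single block,
so `‖h_k‖₁ ≤ G`, and the vectors `a_k = A h_k ∈ ℤʳ` have entries at most `GΔ` and sum to `0`.
By the Steinitz lemma they can be ordered so that all prefix sums lie in `[-rGΔ, rGΔ]ʳ`. If
`N > (2rGΔ + 1)ʳ`, two of the first `N` prefix sums coincide, so a proper nonempty subfamily of
the `a_k` sums to `0`; the matching partial sum of the `h_k` and its complement then split `g`
into two sign-compatible kernel elements of `C`, which is impossible. Hence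
`‖g‖₁ ≤ N G ≤ G (2rGΔ + 1)ʳ`.
-/

open Finset

/-- Two integer vectors are sign-compatible if the product of corresponding
coordinates is always nonnegative. -/
def SignCompat {ι : Type*} (u v : ι → ℤ) : Prop := ∀ j, 0 ≤ u j * v j

/-- `u` belongs to the Graver basis of the integer matrix `C`. -/
def InGraver {κ ι : Type*} [Fintype κ] [Fintype ι] (C : Matrix κ ι ℤ) (u : ι → ℤ) : Prop :=
  u ≠ 0 ∧ C.mulVec u = 0 ∧
    ¬ ∃ v w : ι → ℤ, v ≠ 0 ∧ w ≠ 0 ∧ C.mulVec v = 0 ∧ C.mulVec w = 0 ∧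
      SignCompat v w ∧ u = v + w

/-- `a` has the sign of `c` and `b` that of `d`, where `c = 0` forces `a = 0`. -/
theorem Int.mul_nonneg_of_mul_self_le {a b c d : ℤ} (ha : a * a ≤ a * c)
    (hb : b * b ≤ b * d) (hcd : 0 ≤ c * d) : 0 ≤ a * b := by
  by_contra! hab
  nlinarith [mul_nonneg (mul_self_nonneg a) (mul_self_nonneg b),
    mul_le_mul ha hb (mul_self_nonneg b) (le_trans (mul_self_nonneg a) ha)]

namespace SignCompat

variable {ι α β : Type*}

theorem symm {u v : ι → ℤ} (h : SignCompat u v) : SignCompat v u :=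
  fun j => mul_comm (u j) (v j) ▸ h j

theorem sum {f : α → ι → ℤ} {g : β → ι → ℤ} {s : Finset α} {t : Finset β}
    (h : ∀ a ∈ s, ∀ b ∈ t, SignCompat (f a) (g b)) :
    SignCompat (∑ a ∈ s, f a) (∑ b ∈ t, g b) := fun j => by
  simp only [Finset.sum_apply, Finset.sum_mul_sum]
  exact Finset.sum_nonneg fun a ha => Finset.sum_nonneg fun b hb => h a ha b hb j

theorem mul_self_le_mul_sum {f : α → ι → ℤ} {s : Finset α}
    (h : ∀ a ∈ s, ∀ b ∈ s, SignCompat (f a) (f b)) {a : α} (ha : a ∈ s) (j : ι) :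
    f a j * f a j ≤ f a j * (∑ b ∈ s, f b) j := by
  rw [Finset.sum_apply, Finset.mul_sum]
  exact Finset.single_le_sum (f := fun b => f a j * f b j) (fun b hb => h a ha b hb j) ha

theorem sum_ne_zero {f : α → ι → ℤ} {s : Finset α}
    (h : ∀ a ∈ s, ∀ b ∈ s, SignCompat (f a) (f b)) {a : α} (ha : a ∈ s) (hfa : f a ≠ 0) :
    ∑ b ∈ s, f b ≠ 0 := by
  obtain ⟨j, hj⟩ := Function.ne_iff.mp hfa
  intro hsum
  have := mul_self_le_mul_sum h ha j
  rw [hsum, Pi.zero_apply, mul_zero] at this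
  exact hj (mul_self_eq_zero.mp (le_antisymm this (mul_self_nonneg _)))

theorem of_sum {f : α → ι → ℤ} {g : β → ι → ℤ} {s : Finset α} {t : Finset β}
    (hf : ∀ a ∈ s, ∀ a' ∈ s, SignCompat (f a) (f a'))
    (hg : ∀ b ∈ t, ∀ b' ∈ t, SignCompat (g b) (g b'))
    (h : SignCompat (∑ a ∈ s, f a) (∑ b ∈ t, g b)) :
    ∀ a ∈ s, ∀ b ∈ t, SignCompat (f a) (g b) := fun _a ha _b hb j =>
  Int.mul_nonneg_of_mul_self_le (mul_self_le_mul_sum hf ha j) (mul_self_le_mul_sum hg hb j) (h j)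

theorem natAbs_add {u v : ι → ℤ} (h : SignCompat u v) (j : ι) :
    (u j + v j).natAbs = (u j).natAbs + (v j).natAbs := by
  rcases mul_nonneg_iff.mp (h j) with ⟨hu, hv⟩ | ⟨hu, hv⟩
  · exact Int.natAbs_add_of_nonneg hu hv
  · exact Int.natAbs_add_of_nonpos hu hv

end SignCompat

section GraverDecomposition

variable {κ ι : Type*} [Fintype κ] [Fintype ι]

theorem exists_signCompat_decomposition_of_not_inGraver {C : Matrix κ ι ℤ} {u : ι → ℤ}
    (hu : u ≠ 0) (hCu : C.mulVec u = 0) (hg : ¬ InGraver C u) :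
    ∃ v w : ι → ℤ, v ≠ 0 ∧ w ≠ 0 ∧ C.mulVec v = 0 ∧ C.mulVec w = 0 ∧
      SignCompat v w ∧ u = v + w := by
  by_contra h
  exact hg ⟨hu, hCu, h⟩

theorem exists_graver_decomposition (C : Matrix κ ι ℤ) (u : ι → ℤ) (hu : C.mulVec u = 0) :
    ∃ (N : ℕ) (h : Fin N → ι → ℤ), (∀ k, InGraver C (h k)) ∧ ∑ k, h k = u ∧
      ∀ k k', SignCompat (h k) (h k') := by
  induction hn : ∑ j, (u j).natAbs using Nat.strong_induction_on generalizing u with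
  | _ n ih =>
  by_cases hu0 : u = 0
  · exact ⟨0, Fin.elim0, fun k => k.elim0, by simp [hu0], fun k => k.elim0⟩
  by_cases hgu : InGraver C u
  · exact ⟨1, fun _ => u, fun _ => hgu, by simp, fun _ _ j => mul_self_nonneg (u j)⟩
  obtain ⟨v, w, hv0, hw0, hv, hw, hvw, rfl⟩ :=
    exists_signCompat_decomposition_of_not_inGraver hu0 hu hgu
  have hnorm : ∑ j, ((v + w) j).natAbs = ∑ j, (v j).natAbs + ∑ j, (w j).natAbs := by
    rw [← Finset.sum_add_distrib]
    exact Finset.sum_congr rfl fun j _ => hvw.natAbs_add j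
  have hpos : ∀ x : ι → ℤ, x ≠ 0 → 0 < ∑ j, (x j).natAbs := fun x hx => by
    obtain ⟨j, hj⟩ := Function.ne_iff.mp hx
    exact lt_of_lt_of_le (Int.natAbs_pos.mpr hj) (Finset.single_le_sum
      (f := fun j => (x j).natAbs) (fun _ _ => Nat.zero_le _) (Finset.mem_univ j))
  obtain ⟨N, f, hf, hfv, hff⟩ := ih _ (by rw [← hn, hnorm]; linarith [hpos w hw0]) v hv rfl
  obtain ⟨M, g, hg, hgw, hgg⟩ := ih _ (by rw [← hn, hnorm]; linarith [hpos v hv0]) w hw rfl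
  have hfg := SignCompat.of_sum (fun a _ a' _ => hff a a') (fun b _ b' _ => hgg b b')
    (hfv ▸ hgw ▸ hvw)
  refine ⟨N + M, Fin.append f g, Fin.addCases (by simpa using hf) (by simpa using hg), ?_, ?_⟩
  · simp [Fin.sum_univ_add, hfv, hgw]
  · refine Fin.addCases (fun a => Fin.addCases (fun a' => ?_) (fun b' => ?_))
      (fun b => Fin.addCases (fun a' => ?_) (fun b' => ?_)) <;>
      simp only [Fin.append_left, Fin.append_right]
    · exact hff a a'
    · exact hfg a (Finset.mem_univ _) b' (Finset.mem_univ _)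
    · exact (hfg a' (Finset.mem_univ _) b (Finset.mem_univ _)).symm
    · exact hgg b b'

theorem InGraver.mulVec_sum_ne_zero {α : Type*} [Fintype α] [DecidableEq α] {C : Matrix κ ι ℤ}
    {g : ι → ℤ} (hg : InGraver C g) {h : α → ι → ℤ} (hsum : ∑ a, h a = g)
    (hcompat : ∀ a b, SignCompat (h a) (h b)) (hne : ∀ a, h a ≠ 0)
    {s : Finset α} (hs : s.Nonempty) (hsc : sᶜ.Nonempty) :
    C.mulVec (∑ a ∈ s, h a) ≠ 0 := by
  intro hzero
  obtain ⟨a, ha⟩ := hs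
  obtain ⟨b, hb⟩ := hsc
  have hsplit : g = ∑ a ∈ s, h a + ∑ a ∈ sᶜ, h a := by rw [← hsum, Finset.sum_add_sum_compl]
  have hzero' : C.mulVec (∑ a ∈ sᶜ, h a) = 0 := by
    rw [eq_sub_of_add_eq' hsplit.symm, Matrix.mulVec_sub, hg.2.1, hzero, sub_zero]
  exact hg.2.2 ⟨_, _, SignCompat.sum_ne_zero (fun a _ b _ => hcompat a b) ha (hne a),
    SignCompat.sum_ne_zero (fun a _ b _ => hcompat a b) hb (hne b), hzero, hzero',
    SignCompat.sum fun a _ b _ => hcompat a b, hsplit⟩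

end GraverDecomposition

section BlockDiagonal

open Matrix

variable {o : Type*} [DecidableEq o] {m' n' : o → Type*}

def extendBlock (i : o) (y : n' i → ℤ) : (Σ i, n' i) → ℤ :=
  fun p => Pi.single (M := fun i => n' i → ℤ) i y p.1 p.2

theorem extendBlock_apply_self (i : o) (y : n' i → ℤ) (j : n' i) :
    extendBlock i y ⟨i, j⟩ = y j := by
  simp [extendBlock]

theorem extendBlock_apply_of_ne {i i' : o} (h : i' ≠ i) (y : n' i → ℤ) (j : n' i') :
    extendBlock i y ⟨i', j⟩ = 0 := by
  simp [extendBlock, Pi.single_eq_of_ne h]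

theorem extendBlock_add (i : o) (y z : n' i → ℤ) :
    extendBlock i (y + z) = extendBlock i y + extendBlock i z := by
  ext ⟨i', j⟩
  by_cases h : i' = i
  · subst h; simp [extendBlock_apply_self]
  · simp [extendBlock_apply_of_ne h]

theorem signCompat_extendBlock {i : o} {y z : n' i → ℤ} (h : SignCompat y z) :
    SignCompat (extendBlock i y) (extendBlock i z) := by
  rintro ⟨i', j⟩
  by_cases hi : i' = i
  · subst hi; simpa [extendBlock_apply_self] using h j
  · simp [extendBlock_apply_of_ne hi]

theorem extendBlock_ne_zero {i : o} {y : n' i → ℤ} (hy : y ≠ 0) : extendBlock i y ≠ 0 := by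
  obtain ⟨j, hj⟩ := Function.ne_iff.mp hy
  exact Function.ne_iff.mpr ⟨⟨i, j⟩, by simpa [extendBlock_apply_self] using hj⟩

variable [Fintype o] [∀ i, Fintype (n' i)]

theorem sum_abs_extendBlock (i : o) (y : n' i → ℤ) :
    ∑ p, |extendBlock i y p| = ∑ j, |y j| := by
  rw [Fintype.sum_sigma, Finset.sum_eq_single i (fun i' _ h => by
    simp [extendBlock_apply_of_ne h]) (by simp)]
  simp [extendBlock_apply_self]

variable (B : ∀ i, Matrix (m' i) (n' i) ℤ)

theorem blockDiagonal'_mulVec_apply (x : (Σ i, n' i) → ℤ) (i : o) (ρ : m' i) :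
    (blockDiagonal' B).mulVec x ⟨i, ρ⟩ = (B i).mulVec (fun j => x ⟨i, j⟩) ρ := by
  simp only [mulVec, dotProduct, Fintype.sum_sigma]
  rw [Finset.sum_eq_single i (fun i' _ hi' => Finset.sum_eq_zero fun j _ => by
    rw [blockDiagonal'_apply_ne B ρ j (Ne.symm hi'), zero_mul]) (by simp)]
  simp [blockDiagonal'_apply_eq]

theorem blockDiagonal'_mulVec_eq_zero_iff {x : (Σ i, n' i) → ℤ} :
    (blockDiagonal' B).mulVec x = 0 ↔ ∀ i, (B i).mulVec (fun j => x ⟨i, j⟩) = 0 := by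
  simp only [funext_iff, Sigma.forall, blockDiagonal'_mulVec_apply, Pi.zero_apply]

theorem blockDiagonal'_mulVec_extendBlock {i : o} {y : n' i → ℤ}
    (hy : (B i).mulVec y = 0) : (blockDiagonal' B).mulVec (extendBlock i y) = 0 := by
  refine (blockDiagonal'_mulVec_eq_zero_iff B).mpr fun i' => ?_
  by_cases h : i' = i
  · subst h; simpa [extendBlock_apply_self] using hy
  · simp only [extendBlock_apply_of_ne h]
    exact mulVec_zero _

variable [∀ i, Fintype (m' i)]

theorem InGraver.eq_extendBlock {u : (Σ i, n' i) → ℤ} (hu : InGraver (blockDiagonal' B) u) :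
    ∃ i, u = extendBlock i (fun j => u ⟨i, j⟩) := by
  obtain ⟨hu0, hBu, hind⟩ := hu
  obtain ⟨⟨i, j⟩, hj⟩ := Function.ne_iff.mp hu0
  refine ⟨i, ?_⟩
  set v := extendBlock i (fun j => u ⟨i, j⟩)
  have hv : (blockDiagonal' B).mulVec v = 0 :=
    blockDiagonal'_mulVec_extendBlock B ((blockDiagonal'_mulVec_eq_zero_iff B).mp hBu i)
  by_contra huv
  refine hind ⟨v, u - v, Function.ne_iff.mpr ⟨⟨i, j⟩, by simpa [v, extendBlock_apply_self]⟩,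
    sub_ne_zero.mpr huv, hv, by rw [mulVec_sub, hBu, hv, sub_zero], ?_, by abel⟩
  rintro ⟨i', j'⟩
  by_cases h : i' = i
  · subst h; simp [v, extendBlock_apply_self]
  · simp [v, extendBlock_apply_of_ne h]

theorem InGraver.of_extendBlock {i : o} {y : n' i → ℤ}
    (hy : InGraver (blockDiagonal' B) (extendBlock i y)) : InGraver (B i) y := by
  obtain ⟨hy0, hBy, hind⟩ := hy
  refine ⟨fun h => hy0 (funext fun p => by simp [h, extendBlock]), ?_, ?_⟩
  · simpa [extendBlock_apply_self] using (blockDiagonal'_mulVec_eq_zero_iff B).mp hBy i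
  · rintro ⟨v, w, hv0, hw0, hv, hw, hvw, rfl⟩
    exact hind ⟨_, _, extendBlock_ne_zero hv0, extendBlock_ne_zero hw0,
      blockDiagonal'_mulVec_extendBlock B hv, blockDiagonal'_mulVec_extendBlock B hw,
      signCompat_extendBlock hvw, extendBlock_add i v w⟩

theorem InGraver.sum_abs_le_of_blockDiagonal' {G : ℤ}
    (hG : ∀ i y, InGraver (B i) y → ∑ j, |y j| ≤ G) {u : (Σ i, n' i) → ℤ}
    (hu : InGraver (blockDiagonal' B) u) : ∑ p, |u p| ≤ G := by
  obtain ⟨i, hi⟩ := hu.eq_extendBlock B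
  rw [hi] at hu ⊢
  rw [sum_abs_extendBlock]
  exact hG i _ (hu.of_extendBlock B)

end BlockDiagonal

section Vertex

open Module

variable {K ι E : Type*} [Field K] [AddCommGroup E] [Module K E] [FiniteDimensional K E]

theorem exists_linear_relation_of_finrank_lt_card [DecidableEq ι] (w : ι → E) {F : Finset ι}
    (hF : finrank K E < #F) :
    ∃ z : ι → K, (∀ k ∉ F, z k = 0) ∧ ∑ k ∈ F, z k • w k = 0 ∧ z ≠ 0 := by
  have hdep : ¬ LinearIndepOn K w (F : Set ι) := fun h => by
    have := h.fintype_card_le_finrank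
    simp only [Finset.coe_sort_coe, Fintype.card_coe] at this
    omega
  simp only [linearIndepOn_iff', not_forall, exists_prop] at hdep
  obtain ⟨t, g, htF, hg, i, hit, hgi⟩ := hdep
  refine ⟨fun k => if k ∈ t then g k else 0, fun k hk => if_neg fun hkt => hk (htF hkt), ?_,
    Function.ne_iff.mpr ⟨i, by simpa [hit] using hgi⟩⟩
  simp only [ite_smul, zero_smul]
  rw [Finset.sum_ite_mem, Finset.inter_eq_right.mpr (Finset.coe_subset.mp htF), hg]

variable [LinearOrder K]

/-- The largest `t ≥ 0` with `a - t * c ∈ [0, 1]` (for `a ∈ [0, 1]`). -/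
def maxStep (a c : K) : K := if 0 < c then a / c else (a - 1) / c

theorem sub_maxStep_mul_eq_zero_or_eq_one (a : K) {c : K} (hc : c ≠ 0) :
    a - maxStep a c * c = 0 ∨ a - maxStep a c * c = 1 := by
  unfold maxStep
  split_ifs
  · left; field_simp; ring
  · right; field_simp; ring

def fractionalIndices (S : Finset ι) (x : ι → K) : Finset ι := {k ∈ S | 0 < x k ∧ x k < 1}

theorem fractionalIndices_subset (S : Finset ι) (x : ι → K) : fractionalIndices S x ⊆ S :=
  Finset.filter_subset _ _

variable [IsStrictOrderedRing K]

theorem maxStep_nonneg {a : K} (ha : a ∈ Set.Icc 0 1) (c : K) : 0 ≤ maxStep a c := by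
  unfold maxStep
  split_ifs with hc
  · exact div_nonneg ha.1 hc.le
  · exact div_nonneg_of_nonpos (by linarith [ha.2]) (not_lt.mp hc)

theorem sub_mul_mem_Icc_of_le_maxStep {a c t : K} (ha : a ∈ Set.Icc 0 1) (ht0 : 0 ≤ t)
    (ht : t ≤ maxStep a c) : a - t * c ∈ Set.Icc 0 1 := by
  unfold maxStep at ht
  rcases lt_trichotomy c 0 with hc | rfl | hc
  · rw [if_neg (not_lt.mpr hc.le), le_div_iff_of_neg hc] at ht
    constructor <;> nlinarith [ha.1, ha.2]
  · simpa using ha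
  · rw [if_pos hc, le_div_iff₀ hc] at ht
    constructor <;> nlinarith [ha.1, ha.2]

variable [DecidableEq ι]

theorem exists_card_fractionalIndices_sub_smul_lt {S : Finset ι} {x z : ι → K}
    (hx : ∀ k ∈ S, x k ∈ Set.Icc 0 1) (hz : ∀ k ∉ fractionalIndices S x, z k = 0)
    (hz0 : z ≠ 0) :
    ∃ t : K, (∀ k ∈ S, (x - t • z) k ∈ Set.Icc 0 1) ∧
      #(fractionalIndices S (x - t • z)) < #(fractionalIndices S x) := by
  set F := fractionalIndices S x
  have hFS : F ⊆ S := fractionalIndices_subset S x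
  obtain ⟨k₀, hk₀⟩ := Function.ne_iff.mp hz0
  have hk₀F : k₀ ∈ F := by by_contra h; exact hk₀ (hz k₀ h)
  obtain ⟨ks, hks, hmin⟩ := Finset.exists_min_image {k ∈ F | z k ≠ 0}
    (fun k => maxStep (x k) (z k)) ⟨k₀, Finset.mem_filter.mpr ⟨hk₀F, hk₀⟩⟩
  obtain ⟨hksF, hksz⟩ := Finset.mem_filter.mp hks
  set t := maxStep (x ks) (z ks)
  have ht0 : 0 ≤ t := maxStep_nonneg (hx ks (hFS hksF)) _
  have hstep : ∀ k ∈ S, (x - t • z) k ∈ Set.Icc 0 1 := by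
    intro k hk
    simp only [Pi.sub_apply, Pi.smul_apply, smul_eq_mul]
    by_cases hzk : z k = 0
    · simpa [hzk] using hx k hk
    have hkF : k ∈ F := by by_contra h; exact hzk (hz k h)
    exact sub_mul_mem_Icc_of_le_maxStep (hx k hk) ht0
      (hmin k (Finset.mem_filter.mpr ⟨hkF, hzk⟩))
  refine ⟨t, hstep, lt_of_le_of_lt (Finset.card_le_card fun k hk => ?_)
    (Finset.card_erase_lt_of_mem hksF)⟩
  obtain ⟨hkS, hk0, hk1⟩ := Finset.mem_filter.mp hk
  simp only [Pi.sub_apply, Pi.smul_apply, smul_eq_mul] at hk0 hk1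
  refine Finset.mem_erase.mpr ⟨?_, ?_⟩
  · rintro rfl
    rcases sub_maxStep_mul_eq_zero_or_eq_one (x k) hksz with h | h <;> linarith
  · by_contra hkF
    rw [hz k hkF, mul_zero, sub_zero] at hk0 hk1
    exact hkF (Finset.mem_filter.mpr ⟨hkS, hk0, hk1⟩)

/-- Move along linear relations among the `w k` with fractional `x k` until a coordinate hits
`0` or `1`. -/
theorem exists_card_fractionalIndices_le_finrank (w : ι → E) (S : Finset ι) (x : ι → K)
    (hx : ∀ k ∈ S, x k ∈ Set.Icc 0 1) :
    ∃ y : ι → K, (∀ k ∈ S, y k ∈ Set.Icc 0 1) ∧ ∑ k ∈ S, y k • w k = ∑ k ∈ S, x k • w k ∧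
      #(fractionalIndices S y) ≤ finrank K E := by
  induction hn : #(fractionalIndices S x) using Nat.strong_induction_on generalizing x with
  | _ n ih =>
  by_cases hle : n ≤ finrank K E
  · exact ⟨x, hx, rfl, hn ▸ hle⟩
  obtain ⟨z, hzF, hzw, hz0⟩ := exists_linear_relation_of_finrank_lt_card (K := K) w
    (F := fractionalIndices S x) (by omega)
  obtain ⟨t, ht, hlt⟩ := exists_card_fractionalIndices_sub_smul_lt hx hzF hz0
  obtain ⟨y, hy, hyw, hycard⟩ := ih _ (hn ▸ hlt) (x - t • z) ht rfl
  refine ⟨y, hy, ?_, hycard⟩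
  have hzS : ∑ k ∈ S, z k • w k = 0 := by
    rw [← Finset.sum_subset (fractionalIndices_subset S x) fun k _ hk => by
      rw [hzF k hk, zero_smul], hzw]
  simp only [hyw, Pi.sub_apply, Pi.smul_apply, smul_eq_mul, sub_smul, mul_smul,
    Finset.sum_sub_distrib, ← Finset.smul_sum, hzS, smul_zero, sub_zero]

end Vertex

section Steinitz

variable {K ι κ : Type*} [Field K] [LinearOrder K] [IsStrictOrderedRing K] [Fintype κ]

/-- The Grinberg–Sevastyanov certificate for `S`. The truncated subtraction makes `x = 0` a
certificate whenever `#S ≤ #κ`. -/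
def SteinitzFeasible (v : ι → κ → K) (S : Finset ι) : Prop :=
  ∃ x : ι → K, (∀ k ∈ S, x k ∈ Set.Icc 0 1) ∧
    ∑ k ∈ S, x k = ((#S - Fintype.card κ : ℕ) : K) ∧ ∑ k ∈ S, x k • v k = 0

theorem steinitzFeasible_of_sum_eq_zero {v : ι → κ → K} {S : Finset ι}
    (hS : ∑ k ∈ S, v k = 0) : SteinitzFeasible v S := by
  rcases S.eq_empty_or_nonempty with rfl | hne
  · exact ⟨0, by simp, by simp, by simp⟩
  have hcard : (0 : K) < #S := by exact_mod_cast hne.card_pos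
  have hle : ((#S - Fintype.card κ : ℕ) : K) ≤ #S := by exact_mod_cast Nat.sub_le _ _
  refine ⟨fun _ => ((#S - Fintype.card κ : ℕ) : K) / #S,
    fun _ _ => ⟨by positivity, div_le_one_of_le₀ hle hcard.le⟩, ?_, ?_⟩
  · rw [Finset.sum_const, nsmul_eq_mul, mul_div_cancel₀ _ hcard.ne']
  · rw [← Finset.smul_sum, hS, smul_zero]

theorem steinitzFeasible_of_card_le {v : ι → κ → K} {S : Finset ι}
    (hS : #S ≤ Fintype.card κ) : SteinitzFeasible v S :=
  ⟨0, by simp, by simp [Nat.sub_eq_zero_of_le hS], by simp⟩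

theorem SteinitzFeasible.abs_sum_le {v : ι → κ → K} {S : Finset ι} (hS : SteinitzFeasible v S)
    {M : K} (hM0 : 0 ≤ M) (hM : ∀ k ∈ S, ∀ j, |v k j| ≤ M) (j : κ) :
    |∑ k ∈ S, v k j| ≤ Fintype.card κ * M := by
  obtain ⟨x, hx, hx1, hxv⟩ := hS
  have hxvj : ∑ k ∈ S, x k * v k j = 0 := by
    simpa [Finset.sum_apply] using congrFun hxv j
  have hcard : (#S : K) ≤ ((#S - Fintype.card κ : ℕ) : K) + Fintype.card κ := by
    exact_mod_cast le_tsub_add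
  calc |∑ k ∈ S, v k j| = |∑ k ∈ S, (1 - x k) * v k j| := by
        simp [sub_mul, Finset.sum_sub_distrib, hxvj]
    _ ≤ ∑ k ∈ S, |(1 - x k) * v k j| := Finset.abs_sum_le_sum_abs _ _
    _ ≤ ∑ k ∈ S, (1 - x k) * M := Finset.sum_le_sum fun k hk => by
        rw [abs_mul, abs_of_nonneg (sub_nonneg.mpr (hx k hk).2)]
        exact mul_le_mul_of_nonneg_left (hM k hk j) (sub_nonneg.mpr (hx k hk).2)
    _ = (#S - ∑ k ∈ S, x k) * M := by
        rw [← Finset.sum_mul, Finset.sum_sub_distrib, Finset.sum_const, nsmul_one]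
    _ ≤ Fintype.card κ * M := mul_le_mul_of_nonneg_right (by linarith) hM0

theorem exists_eq_zero_of_sum_add_eq_card [DecidableEq ι] {S : Finset ι} {y : ι → K}
    (hy : ∀ k ∈ S, y k ∈ Set.Icc 0 1) {m : ℕ} (hm : 0 < m)
    (hsum : ∑ k ∈ S, y k + m = #S) (hcard : #(fractionalIndices S y) ≤ m) :
    ∃ k ∈ S, y k = 0 := by
  by_contra! hy0
  set F := fractionalIndices S y
  have hFS := fractionalIndices_subset S y
  have hone : ∀ k ∈ S \ F, y k = 1 := fun k hk => by
    obtain ⟨hkS, hkF⟩ := Finset.mem_sdiff.mp hk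
    have hpos := lt_of_le_of_ne (hy k hkS).1 (hy0 k hkS).symm
    exact le_antisymm (hy k hkS).2 (not_lt.mp fun h => hkF (Finset.mem_filter.mpr ⟨hkS, hpos, h⟩))
  have hsplit : ∑ k ∈ F, y k + m = #F := by
    have hcards : ((#(S \ F) : ℕ) : K) + #F = #S := by
      exact_mod_cast Finset.card_sdiff_add_card_eq_card hFS
    rw [← Finset.sum_sdiff hFS, Finset.sum_congr rfl hone, Finset.sum_const, nsmul_one] at hsum
    linarith
  rcases F.eq_empty_or_nonempty with hF | hF
  · have hm0 : (m : K) = 0 := by simpa [hF] using hsplit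
    exact hm.ne' (by exact_mod_cast hm0)
  · have hpos : 0 < ∑ k ∈ F, y k :=
      Finset.sum_pos (fun k hk => (Finset.mem_filter.mp hk).2.1) hF
    have : (#F : K) ≤ m := by exact_mod_cast hcard
    linarith

theorem SteinitzFeasible.exists_erase [DecidableEq ι] {v : ι → κ → K} {S : Finset ι}
    (hS : SteinitzFeasible v S) (hne : S.Nonempty) :
    ∃ k ∈ S, SteinitzFeasible v (S.erase k) := by
  obtain ⟨x, hx, hx1, hxv⟩ := hS
  set r := Fintype.card κ
  by_cases hsmall : #S ≤ r
  · obtain ⟨k, hk⟩ := hne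
    exact ⟨k, hk, steinitzFeasible_of_card_le (by rw [Finset.card_erase_of_mem hk]; omega)⟩
  push Not at hsmall
  -- Scale `x` to total `#S - r - 1` and pass to a point with at most `r + 1` fractional
  -- coordinates; that total forces a zero coordinate, which can then be dropped.
  rw [Nat.cast_sub hsmall.le] at hx1
  have hgap : (r : K) + 1 ≤ #S := by exact_mod_cast hsmall
  set c : K := (#S - r - 1) / (#S - r)
  have hc : c ∈ Set.Icc 0 1 :=
    ⟨div_nonneg (by linarith) (by linarith), div_le_one_of_le₀ (by linarith) (by linarith)⟩
  obtain ⟨y, hy, hyw, hycard⟩ := exists_card_fractionalIndices_le_finrank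
    (fun k => ((1 : K), v k)) S (c • x) fun k hk =>
      ⟨mul_nonneg hc.1 (hx k hk).1, mul_le_one₀ hc.2 (hx k hk).1 (hx k hk).2⟩
  have hy1 : ∑ k ∈ S, y k = #S - r - 1 := by
    have := congrArg Prod.fst hyw
    simp only [Prod.fst_sum, Prod.smul_fst, smul_eq_mul, mul_one, Pi.smul_apply] at this
    rw [this, ← Finset.mul_sum, hx1, div_mul_cancel₀ _ (by linarith)]
  have hyv : ∑ k ∈ S, y k • v k = 0 := by
    have := congrArg Prod.snd hyw
    simp only [Prod.snd_sum, Prod.smul_snd, Pi.smul_apply, smul_eq_mul, mul_smul] at this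
    rw [this, ← Finset.smul_sum, hxv, smul_zero]
  obtain ⟨k, hk, hyk⟩ := exists_eq_zero_of_sum_add_eq_card hy (m := r + 1) (Nat.succ_pos r)
    (by push_cast; linarith) (by simpa [Module.finrank_prod, add_comm] using hycard)
  refine ⟨k, hk, y, fun i hi => hy i (Finset.mem_of_mem_erase hi), ?_, ?_⟩
  · rw [Finset.sum_erase S hyk, hy1, Finset.card_erase_of_mem hk, Nat.sub_sub,
      Nat.cast_sub (by omega)]
    push_cast
    ring
  · rw [Finset.sum_erase S (by rw [hyk, zero_smul]), hyv]

theorem SteinitzFeasible.exists_list [DecidableEq ι] {v : ι → κ → K} {M : K} (hM0 : 0 ≤ M)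
    (hM : ∀ k j, |v k j| ≤ M) {S : Finset ι} (hS : SteinitzFeasible v S) :
    ∃ l : List ι, l.Nodup ∧ l.toFinset = S ∧
      ∀ m j, |∑ k ∈ (l.take m).toFinset, v k j| ≤ Fintype.card κ * M := by
  induction S using Finset.strongInduction with
  | H S ih =>
  rcases S.eq_empty_or_nonempty with rfl | hne
  · exact ⟨[], List.nodup_nil, rfl, fun m j => by simpa using mul_nonneg (Nat.cast_nonneg _) hM0⟩
  obtain ⟨k, hk, hSk⟩ := hS.exists_erase hne
  obtain ⟨l, hl, hlS, hlM⟩ := ih _ (Finset.erase_ssubset hk) hSk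
  have hkl : k ∉ l := by rw [← List.mem_toFinset, hlS]; exact Finset.notMem_erase k S
  have hlk : (l ++ [k]).toFinset = S := by
    rw [List.toFinset_append, hlS]; simp [Finset.insert_erase hk]
  refine ⟨l ++ [k], List.concat_eq_append ▸ hl.concat hkl, hlk, fun m j => ?_⟩
  rcases le_or_gt m l.length with hm | hm
  · rw [List.take_append_of_le_length hm]
    exact hlM m j
  · rw [List.take_of_length_le (by simp; omega), hlk]
    exact hS.abs_sum_le hM0 (fun k _ => hM k) j

/-- The Steinitz lemma for the sup-norm, with the Grinberg–Sevastyanov constant `dim`. -/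
theorem exists_list_abs_sum_take_le [DecidableEq ι] {v : ι → κ → K} {M : K} (hM0 : 0 ≤ M)
    (hM : ∀ k j, |v k j| ≤ M) {S : Finset ι} (hS : ∑ k ∈ S, v k = 0) :
    ∃ l : List ι, l.Nodup ∧ l.toFinset = S ∧
      ∀ m j, |∑ k ∈ (l.take m).toFinset, v k j| ≤ Fintype.card κ * M :=
  (steinitzFeasible_of_sum_eq_zero hS).exists_list hM0 hM

end Steinitz

theorem exists_sum_eq_zero_of_card_lt {ι κ : Type*} [Fintype ι] [DecidableEq ι] [Fintype κ]
    (a : ι → κ → ℤ) {M : ℤ} (hM0 : 0 ≤ M) (hM : ∀ k j, |a k j| ≤ M) (hsum : ∑ k, a k = 0)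
    (hcard : (2 * Fintype.card κ * M + 1) ^ Fintype.card κ < Fintype.card ι) :
    ∃ S : Finset ι, S.Nonempty ∧ Sᶜ.Nonempty ∧ ∑ k ∈ S, a k = 0 := by
  classical
  set R : ℤ := Fintype.card κ * M
  obtain ⟨l, hl, hlS, hlR⟩ := exists_list_abs_sum_take_le (K := ℚ) (v := fun k j => (a k j : ℚ))
    (M := M) (by exact_mod_cast hM0) (fun k j => by exact_mod_cast hM k j)
    (S := Finset.univ) (funext fun j => by
      simpa [Finset.sum_apply] using congrArg (fun x : ℤ => (x : ℚ)) (congrFun hsum j))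
  set P : ℕ → Finset ι := fun m => (l.take m).toFinset
  have hlen : l.length = Fintype.card ι := by
    rw [← List.toFinset_card_of_nodup hl, hlS, Finset.card_univ]
  have hPcard : ∀ m, #(P m) = min m (Fintype.card ι) := fun m => by
    rw [List.toFinset_card_of_nodup (hl.sublist (List.take_sublist m l)), List.length_take, hlen]
  have hPR : ∀ m j, |∑ k ∈ P m, a k j| ≤ R := fun m j => by exact_mod_cast hlR m j
  have hbox : #(Fintype.piFinset fun _ : κ => Finset.Icc (-R) R) <
      #(Finset.range (Fintype.card ι)) := by
    rw [Fintype.card_piFinset, Finset.prod_const, Int.card_Icc, Finset.card_range, Finset.card_univ]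
    zify
    rw [Int.toNat_of_nonneg (by linarith [mul_nonneg (Nat.cast_nonneg (Fintype.card κ)) hM0])]
    convert hcard using 2
    ring
  obtain ⟨m₁, hm₁, m₂, hm₂, hne, heq⟩ := Finset.exists_ne_map_eq_of_card_lt_of_maps_to hbox
    (f := fun m => ∑ k ∈ P m, a k) fun m _ => Finset.mem_coe.mpr <| Fintype.mem_piFinset.mpr
      fun j => Finset.mem_Icc.mpr <| abs_le.mp <| by simpa [Finset.sum_apply] using hPR m j
  wlog hlt : m₁ < m₂ generalizing m₁ m₂
  · exact this m₂ hm₂ m₁ hm₁ hne.symm heq.symm (lt_of_le_of_ne (not_lt.mp hlt) hne.symm)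
  have hsub : P m₁ ⊆ P m₂ := fun k hk => List.mem_toFinset.mpr
    (List.take_subset_take_left l hlt.le (List.mem_toFinset.mp hk))
  have hm₂' := Finset.mem_range.mp hm₂
  refine ⟨P m₂ \ P m₁, ?_, ?_, ?_⟩
  · rw [← Finset.card_pos, Finset.card_sdiff_of_subset hsub, hPcard, hPcard]; omega
  · rw [← Finset.card_pos, Finset.card_compl, Finset.card_sdiff_of_subset hsub, hPcard, hPcard]
    omega
  · rw [Finset.sum_sdiff_eq_sub hsub, sub_eq_zero]
    exact heq.symm

section LinkedBlocks

open Matrix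

theorem abs_mulVec_apply_le {κ ι : Type*} [Fintype ι] {T : Matrix κ ι ℤ} {Δ : ℤ}
    (hT : ∀ i j, |T i j| ≤ Δ) (x : ι → ℤ) (i : κ) : |T.mulVec x i| ≤ Δ * ∑ j, |x j| := by
  rw [Finset.mul_sum]
  refine (Finset.abs_sum_le_sum_abs _ _).trans (Finset.sum_le_sum fun j _ => ?_)
  rw [abs_mul]
  exact mul_le_mul_of_nonneg_right (hT i j) (abs_nonneg _)

theorem fromRows_mulVec_eq_zero_iff {κ μ ι : Type*} [Fintype ι] {T : Matrix κ ι ℤ}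
    {D : Matrix μ ι ℤ} {x : ι → ℤ} :
    (fromRows T D).mulVec x = 0 ↔ T.mulVec x = 0 ∧ D.mulVec x = 0 := by
  simp only [fromRows_mulVec, funext_iff, Sum.forall, Sum.elim_inl, Sum.elim_inr, Pi.zero_apply]

theorem InGraver.sum_abs_le_of_fromRows {κ μ ι : Type*} [Fintype κ] [Fintype μ] [Fintype ι]
    {T : Matrix κ ι ℤ} {D : Matrix μ ι ℤ} {Δ G : ℤ} (hΔ : 0 ≤ Δ) (hG : 0 ≤ G)
    (hT : ∀ i j, |T i j| ≤ Δ) (hD : ∀ u, InGraver D u → ∑ j, |u j| ≤ G)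
    {g : ι → ℤ} (hg : InGraver (fromRows T D) g) :
    ∑ j, |g j| ≤ G * (2 * Fintype.card κ * G * Δ + 1) ^ Fintype.card κ := by
  obtain ⟨hTg, hDg⟩ := fromRows_mulVec_eq_zero_iff.mp hg.2.1
  obtain ⟨N, h, hgr, hsum, hcompat⟩ := exists_graver_decomposition D g hDg
  have hN : (N : ℤ) ≤ (2 * Fintype.card κ * (G * Δ) + 1) ^ Fintype.card κ := by
    by_contra! hlt
    obtain ⟨S, hS, hSc, hS0⟩ := exists_sum_eq_zero_of_card_lt (fun k => T.mulVec (h k))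
      (mul_nonneg hG hΔ)
      (fun k i => (abs_mulVec_apply_le hT (h k) i).trans
        (by rw [mul_comm G]; exact mul_le_mul_of_nonneg_left (hD _ (hgr k)) hΔ))
      (by rw [← mulVec_sum, hsum, hTg]) (by simpa using hlt)
    refine hg.mulVec_sum_ne_zero hsum hcompat (fun k => (hgr k).1) hS hSc
      (fromRows_mulVec_eq_zero_iff.mpr ⟨?_, ?_⟩)
    · rw [mulVec_sum, hS0]
    · rw [mulVec_sum]
      exact Finset.sum_eq_zero fun k _ => (hgr k).2.1
  calc ∑ j, |g j| = ∑ j, |∑ k, h k j| := by simp [← hsum, Finset.sum_apply]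
    _ ≤ ∑ j, ∑ k, |h k j| := Finset.sum_le_sum fun j _ => Finset.abs_sum_le_sum_abs _ _
    _ = ∑ k, ∑ j, |h k j| := Finset.sum_comm
    _ ≤ ∑ _k : Fin N, G := Finset.sum_le_sum fun k _ => hD _ (hgr k)
    _ = N * G := by simp
    _ ≤ (2 * Fintype.card κ * (G * Δ) + 1) ^ Fintype.card κ * G :=
        mul_le_mul_of_nonneg_right hN hG
    _ = G * (2 * Fintype.card κ * G * Δ + 1) ^ Fintype.card κ := by ring

end LinkedBlocks

theorem graver_norm_linked_blocks_general
    (n r : ℕ)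
    (t s : Fin n → ℕ)
    (A : (i : Fin n) → Matrix (Fin r) (Fin (t i)) ℤ)
    (B : (i : Fin n) → Matrix (Fin (s i)) (Fin (t i)) ℤ)
    (Δ G : ℤ) (hΔ1 : 1 ≤ Δ) (hG1 : 1 ≤ G)
    (hΔ : ∀ i k j, |A i k j| ≤ Δ)
    (hG : ∀ i g, InGraver (B i) g → ∑ j, |g j| ≤ G)
    (C : Matrix (Fin r ⊕ (Σ i : Fin n, Fin (s i))) (Σ i : Fin n, Fin (t i)) ℤ)
    (hCtop : ∀ (col : Σ i : Fin n, Fin (t i)) (k : Fin r),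
      C (Sum.inl k) col = A col.1 k col.2)
    (hCblock : ∀ (col : Σ i : Fin n, Fin (t i)) (row : Σ i : Fin n, Fin (s i)),
      C (Sum.inr row) col =
        if h : col.1 = row.1 then B row.1 row.2 (h ▸ col.2) else 0)
    (g : (Σ i : Fin n, Fin (t i)) → ℤ) (hg : InGraver C g) :
    ∑ col, |g col| ≤ G * (2 * (r : ℤ) * G * Δ + 1) ^ r := by
  have hC : C = Matrix.fromRows (Matrix.of fun k col => A col.1 k col.2)
      (Matrix.blockDiagonal' B) := by
    ext (k | ⟨i, ρ⟩) ⟨i', j⟩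
    · simp [hCtop]
    · rw [hCblock]
      by_cases h : i' = i
      · subst h
        simp [Matrix.blockDiagonal'_apply_eq]
      · simp [h, Matrix.blockDiagonal'_apply_ne B ρ j (Ne.symm h)]
  subst hC
  simpa using hg.sum_abs_le_of_fromRows (by linarith) (by linarith)
    (fun k col => by exact hΔ col.1 k col.2) fun u hu => hu.sum_abs_le_of_blockDiagonal' B hG

/-- If `C` consists of the linking rows `(A₁ ⋯ Aₙ)` on top of
the block-diagonal matrix `diag(B₁,…,Bₙ)`, entries of the `Aᵢ` are bounded by `Δ`
and Graver elements of the `Bᵢ` have `ℓ₁`-norm at most `G`, then every Graver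
element of `C` has `ℓ₁`-norm at most `G·(2rGΔ + 1)^r`. -/
theorem graver_norm_linked_blocks
    (n r : ℕ) (hr : 1 ≤ r)
    (t s : Fin n → ℕ)
    (A : (i : Fin n) → Matrix (Fin r) (Fin (t i)) ℤ)
    (B : (i : Fin n) → Matrix (Fin (s i)) (Fin (t i)) ℤ)
    (Δ G : ℤ) (hΔ1 : 1 ≤ Δ) (hG1 : 1 ≤ G)
    (hΔ : ∀ i k j, |A i k j| ≤ Δ)
    (hG : ∀ i g, InGraver (B i) g → ∑ j, |g j| ≤ G)
    (C : Matrix (Fin r ⊕ (Σ i : Fin n, Fin (s i))) (Σ i : Fin n, Fin (t i)) ℤ)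
    (hCtop : ∀ (col : Σ i : Fin n, Fin (t i)) (k : Fin r),
      C (Sum.inl k) col = A col.1 k col.2)
    (hCblock : ∀ (col : Σ i : Fin n, Fin (t i)) (row : Σ i : Fin n, Fin (s i)),
      C (Sum.inr row) col =
        if h : col.1 = row.1 then B row.1 row.2 (h ▸ col.2) else 0)
    (g : (Σ i : Fin n, Fin (t i)) → ℤ) (hg : InGraver C g) :
    ∑ col, |g col| ≤ G * (2 * (r : ℤ) * G * Δ + 1) ^ r :=
  graver_norm_linked_blocks_general n r t s A B Δ G hΔ1 hG1 hΔ hG C hCtop hCblock g hg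
end

section
/- If A ∈ ℤ^{m×t} has dual treedepth at most d and every entry of A has absolute value at most Δ (with Δ ≥ 1), then every Graver basis element of A has ℓ1-norm at most (3Δ)^{2^d − 1}. -/
open Finset

/-- `HasTreedepth d m t A` : the matrix `A ∈ ℤ^{m×t}` has dual treedepth at most
`d`. A matrix with no rows has treedepth `0` (and hence at most any `d`); a
matrix has treedepth at most `d` if, after permuting rows and columns, it is
block-diagonal with every block strictly smaller and of treedepth at most `d`,
or (for `d ≥ 1`) some row can be deleted so that the resulting matrix has
treedepth at most `d − 1`. -/
inductive HasTreedepth : (d m t : ℕ) → Matrix (Fin m) (Fin t) ℤ → Prop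
  | empty (d t : ℕ) (A : Matrix (Fin 0) (Fin t) ℤ) : HasTreedepth d 0 t A
  | blockdiag {d m t : ℕ} (m₁ m₂ t₁ t₂ : ℕ) (A : Matrix (Fin m) (Fin t) ℤ)
      (e : Fin m ≃ (Fin m₁ ⊕ Fin m₂)) (f : Fin t ≃ (Fin t₁ ⊕ Fin t₂))
      (hsmall₁ : m₁ + t₁ < m + t) (hsmall₂ : m₂ + t₂ < m + t)
      (hzero₁ : ∀ k₁ j₂, A (e.symm (Sum.inl k₁)) (f.symm (Sum.inr j₂)) = 0)
      (hzero₂ : ∀ k₂ j₁, A (e.symm (Sum.inr k₂)) (f.symm (Sum.inl j₁)) = 0)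
      (hblock₁ : HasTreedepth d m₁ t₁
        (fun k j => A (e.symm (Sum.inl k)) (f.symm (Sum.inl j))))
      (hblock₂ : HasTreedepth d m₂ t₂
        (fun k j => A (e.symm (Sum.inr k)) (f.symm (Sum.inr j)))) :
      HasTreedepth d m t A
  | delrow {d m t : ℕ} (A : Matrix (Fin (m + 1)) (Fin t) ℤ) (k₀ : Fin (m + 1))
      (h : HasTreedepth d m t (fun k j => A (k₀.succAbove k) j)) :
      HasTreedepth (d + 1) (m + 1) t A

/-- `v` is conformal to `u`. -/

def Conf {ι : Type*} (v u : ι → ℤ) : Prop := ∀ j, 0 ≤ v j * u j ∧ |v j| ≤ |u j|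

lemma sign_trick {a b s : ℤ} (hz : s = 0 → a = 0) (ha : 0 ≤ a * s) (hb : 0 ≤ b * s) :
    0 ≤ a * b := by
  rcases lt_trichotomy s 0 with hs | hs | hs
  · have ha' : a ≤ 0 := by nlinarith
    have hb' : b ≤ 0 := by nlinarith
    nlinarith
  · simp [hz hs]
  · have ha' : 0 ≤ a := by nlinarith
    have hb' : 0 ≤ b := by nlinarith
    exact mul_nonneg ha' hb'

lemma abs_add_eq_of_mul_nonneg {a b : ℤ} (h : 0 ≤ a * b) : |a + b| = |a| + |b| := by
  rcases le_or_gt 0 a with ha | ha <;> rcases le_or_gt 0 b with hb | hb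
  · rw [abs_of_nonneg ha, abs_of_nonneg hb, abs_of_nonneg (add_nonneg ha hb)]
  · have hab : a * b ≤ 0 := mul_nonpos_of_nonneg_of_nonpos ha hb.le
    have h0 : a = 0 := by
      rcases mul_eq_zero.mp (le_antisymm hab h) with h' | h'
      · exact h'
      · exact absurd h' hb.ne
    simp [h0]
  · have hab : a * b ≤ 0 := mul_nonpos_of_nonpos_of_nonneg ha.le hb
    have h0 : b = 0 := by
      rcases mul_eq_zero.mp (le_antisymm hab h) with h' | h'
      · exact absurd h' ha.ne
      · exact h'
    simp [h0]
  · rw [abs_of_neg ha, abs_of_neg hb, abs_of_neg (add_neg ha hb)]; ring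

lemma list_sum_mul_nonneg {s : ℤ} {l : List ℤ} (h : ∀ x ∈ l, 0 ≤ x * s) : 0 ≤ l.sum * s := by
  induction l with
  | nil => simp
  | cons a l ih =>
    simp only [List.sum_cons, add_mul]
    exact add_nonneg (h a (by simp)) (ih fun x hx => h x (by simp [hx]))

lemma list_sum_eq_zero_of {s : ℤ} (hs : s = 0) {l : List ℤ}
    (h : ∀ x ∈ l, |x| ≤ |s|) : l.sum = 0 := by
  have : ∀ x ∈ l, x = 0 := by
    intro x hx
    have := h x hx
    rw [hs] at this
    simpa using abs_nonpos_iff.mp (by simpa using this)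
  induction l with
  | nil => simp
  | cons a l ih =>
    simp only [List.sum_cons]
    rw [this a (by simp), ih (fun x hx => h x (by simp [hx])) (fun x hx => this x (by simp [hx]))]
    simp

lemma list_abs_sum {s : ℤ} {l : List ℤ} (h : ∀ x ∈ l, 0 ≤ x * s ∧ |x| ≤ |s|) :
    |l.sum| = (l.map (fun x => |x|)).sum := by
  induction l with
  | nil => simp
  | cons a l ih =>
    have h' : ∀ x ∈ l, 0 ≤ x * s ∧ |x| ≤ |s| := fun x hx => h x (by simp [hx])
    have hsc : 0 ≤ a * l.sum := by
      have hz : s = 0 → a = 0 := by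
        intro hs
        have := (h a (by simp)).2
        rw [hs] at this
        simpa using abs_nonpos_iff.mp (by simpa using this)
      refine sign_trick hz (h a (by simp)).1 (list_sum_mul_nonneg (fun x hx => (h' x hx).1))
    simp only [List.sum_cons, List.map_cons]
    rw [abs_add_eq_of_mul_nonneg hsc, ih h']

lemma conf_zero_of {ι : Type*} {v u : ι → ℤ} (hc : Conf v u) {j : ι} (hj : u j = 0) :
    v j = 0 := by
  have := (hc j).2
  rw [hj] at this
  simpa using abs_nonpos_iff.mp (by simpa using this)

lemma conf_trans {ι : Type*} {w v u : ι → ℤ} (h1 : Conf w v) (h2 : Conf v u) : Conf w u := by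
  intro j
  refine ⟨?_, le_trans (h1 j).2 (h2 j).2⟩
  rcases eq_or_ne (v j) 0 with hv | hv
  · have := conf_zero_of h1 hv
    simp [this]
  · have h3 : 0 ≤ (w j * v j) * (u j * v j) :=
      mul_nonneg (h1 j).1 (by rw [mul_comm]; exact (h2 j).1)
    have h4 : 0 ≤ (w j * u j) * (v j * v j) := by nlinarith
    have h5 : 0 < v j * v j := by rcases lt_or_gt_of_ne hv with h | h <;> nlinarith
    exact nonneg_of_mul_nonneg_right (by linarith [h4, mul_comm (w j * u j) (v j * v j)] : 0 ≤ (v j * v j) * (w j * u j)) h5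

lemma list_sum_apply' {ι : Type*} (l : List (ι → ℤ)) (j : ι) :
    l.sum j = (l.map (fun h => h j)).sum := by
  induction l with
  | nil => simp
  | cons a l ih => simp [ih]

lemma conf_sum_sign {ι : Type*} {u : ι → ℤ} {l : List (ι → ℤ)} (hc : ∀ h ∈ l, Conf h u) :
    ∀ j, 0 ≤ l.sum j * u j ∧ (u j = 0 → l.sum j = 0) := by
  intro j
  constructor
  · rw [list_sum_apply']
    exact list_sum_mul_nonneg (by
      intro x hx
      obtain ⟨h, hh, rfl⟩ := List.mem_map.mp hx
      exact (hc h hh j).1)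
  · intro hj
    rw [list_sum_apply']
    exact list_sum_eq_zero_of hj (by
      intro x hx
      obtain ⟨h, hh, rfl⟩ := List.mem_map.mp hx
      exact (hc h hh j).2)

lemma conf_sums_signCompat {ι : Type*} {u : ι → ℤ} {l₁ l₂ : List (ι → ℤ)}
    (h1 : ∀ h ∈ l₁, Conf h u) (h2 : ∀ h ∈ l₂, Conf h u) :
    SignCompat l₁.sum l₂.sum := by
  intro j
  rcases eq_or_ne (u j) 0 with hj | hj
  · rw [(conf_sum_sign h1 j).2 hj]; simp
  · exact sign_trick (fun hj' => absurd hj' hj)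
      (conf_sum_sign h1 j).1 (conf_sum_sign h2 j).1

lemma sum_list_swap {ι : Type*} [Fintype ι] (l : List (ι → ℤ)) (φ : (ι → ℤ) → ι → ℤ) :
    ∑ j, (l.map (fun h => φ h j)).sum = (l.map (fun h => ∑ j, φ h j)).sum := by
  induction l with
  | nil => simp
  | cons a l ih => simp [Finset.sum_add_distrib, ih]

lemma norm_additivity {ι : Type*} [Fintype ι] {u : ι → ℤ} {l : List (ι → ℤ)}
    (hc : ∀ h ∈ l, Conf h u) :
    ∑ j, |l.sum j| = (l.map (fun h => ∑ j, |h j|)).sum := by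
  calc ∑ j, |l.sum j| = ∑ j, (l.map (fun h => |h j|)).sum := by
        refine Finset.sum_congr rfl fun j _ => ?_
        rw [list_sum_apply']
        rw [show (l.map fun h => |h j|) = ((l.map fun h => h j).map fun x => |x|) by
          simp [List.map_map, Function.comp]]
        refine list_abs_sum (s := u j) ?_
        intro x hx
        obtain ⟨h, hh, rfl⟩ := List.mem_map.mp hx
        exact hc h hh j
    _ = (l.map (fun h => ∑ j, |h j|)).sum := sum_list_swap l (fun h j => |h j|)

lemma mulVec_list_sum_zero {m t : ℕ} (C : Matrix (Fin m) (Fin t) ℤ) {l : List (Fin t → ℤ)}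
    (h : ∀ v ∈ l, C.mulVec v = 0) : C.mulVec l.sum = 0 := by
  induction l with
  | nil => simp [Matrix.mulVec_zero]
  | cons a l ih =>
    show C.mulVec (a + l.sum) = 0
    rw [Matrix.mulVec_add, h a (by simp), ih (fun v hv => h v (by simp [hv]))]
    simp

lemma dot_list_sum {t : ℕ} (a : Fin t → ℤ) (l : List (Fin t → ℤ)) :
    dotProduct a l.sum = (l.map (fun v => dotProduct a v)).sum := by
  induction l with
  | nil => simp
  | cons v l ih =>
    show dotProduct a (v + l.sum) = _
    rw [dotProduct_add, ih]
    simp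

lemma norm_nonneg_sum {ι : Type*} [Fintype ι] (u : ι → ℤ) : 0 ≤ ∑ j, |u j| :=
  Finset.sum_nonneg fun j _ => abs_nonneg _

lemma norm_eq_zero_iff {ι : Type*} [Fintype ι] {u : ι → ℤ} : ∑ j, |u j| = 0 ↔ u = 0 := by
  constructor
  · intro h
    funext j
    have := (Finset.sum_eq_zero_iff_of_nonneg (fun j _ => abs_nonneg (u j))).mp h j (by simp)
    simpa using abs_eq_zero.mp this
  · intro h; simp [h]

lemma norm_pos_of_ne {ι : Type*} [Fintype ι] {u : ι → ℤ} (h : u ≠ 0) : 1 ≤ ∑ j, |u j| := by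
  rcases lt_or_ge (∑ j, |u j|) 1 with h' | h'
  · exact absurd (norm_eq_zero_iff.mp (le_antisymm (by omega) (norm_nonneg_sum u))) h
  · exact h'

/-- Decomposition of a kernel element into a conformal sum of Graver basis elements. -/

lemma graver_decomp {m' t : ℕ} (C : Matrix (Fin m') (Fin t) ℤ) :
    ∀ (n : ℕ) (u : Fin t → ℤ), (∑ j, |u j|).toNat ≤ n → C.mulVec u = 0 →
      ∃ l : List (Fin t → ℤ), (∀ h ∈ l, InGraver C h ∧ Conf h u) ∧ l.sum = u := by
  intro n
  induction n with
  | zero =>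
    intro u hn hu
    have h0 : u = 0 := by
      refine norm_eq_zero_iff.mp (le_antisymm ?_ (norm_nonneg_sum u))
      omega
    exact ⟨[], by simp, by simp [h0]⟩
  | succ n ih =>
    intro u hn hu
    rcases eq_or_ne u 0 with h0 | h0
    · exact ⟨[], by simp, by simp [h0]⟩
    by_cases hG : InGraver C u
    · exact ⟨[u], by
        intro h hh
        simp only [List.mem_singleton] at hh
        subst hh
        exact ⟨hG, fun j => ⟨mul_self_nonneg _, le_refl _⟩⟩, by simp⟩
    · have hdec : ∃ v w : Fin t → ℤ, v ≠ 0 ∧ w ≠ 0 ∧ C.mulVec v = 0 ∧ C.mulVec w = 0 ∧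
          SignCompat v w ∧ u = v + w := by
        by_contra hne
        exact hG ⟨h0, hu, hne⟩
      obtain ⟨v, w, hv0, hw0, hCv, hCw, hsc, huvw⟩ := hdec
      have hconfv : Conf v u := by
        intro j
        have h1 : u j = v j + w j := by rw [huvw]; simp
        constructor
        · rw [h1]; nlinarith [hsc j, sq_nonneg (v j)]
        · rw [h1, abs_add_eq_of_mul_nonneg (hsc j)]
          linarith [abs_nonneg (w j)]
      have hconfw : Conf w u := by
        intro j
        have h1 : u j = v j + w j := by rw [huvw]; simp
        constructor
        · rw [h1]; nlinarith [hsc j, sq_nonneg (w j)]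
        · rw [h1, abs_add_eq_of_mul_nonneg (hsc j)]
          linarith [abs_nonneg (v j)]
      have hsplit : ∑ j, |u j| = (∑ j, |v j|) + ∑ j, |w j| := by
        rw [← Finset.sum_add_distrib]
        refine Finset.sum_congr rfl fun j _ => ?_
        have h1 : u j = v j + w j := by rw [huvw]; simp
        rw [h1, abs_add_eq_of_mul_nonneg (hsc j)]
      have hv1 : 1 ≤ ∑ j, |v j| := norm_pos_of_ne hv0
      have hw1 : 1 ≤ ∑ j, |w j| := norm_pos_of_ne hw0
      have hnv : (∑ j, |v j|).toNat ≤ n := by omega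
      have hnw : (∑ j, |w j|).toNat ≤ n := by omega
      obtain ⟨lv, hlv, hlvs⟩ := ih v hnv hCv
      obtain ⟨lw, hlw, hlws⟩ := ih w hnw hCw
      refine ⟨lv ++ lw, ?_, by rw [List.sum_append, hlvs, hlws, huvw]⟩
      intro h hh
      rcases List.mem_append.mp hh with hh' | hh'
      · exact ⟨(hlv h hh').1, conf_trans (hlv h hh').2 hconfv⟩
      · exact ⟨(hlw h hh').1, conf_trans (hlw h hh').2 hconfw⟩

/-- Rearrangement: a list of integers (attached to elements via `f`) summing to `-s`,
each bounded by `M` in absolute value, can be permuted so that all running sums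
starting from `s` stay within `[-M, M]`. -/

lemma order_lemma {α : Type*} (f : α → ℤ) (M : ℤ) :
    ∀ (n : ℕ) (l : List α) (s : ℤ), l.length = n → |s| ≤ M → (∀ x ∈ l, |f x| ≤ M) →
      s + (l.map f).sum = 0 →
      ∃ l' : List α, l'.Perm l ∧ ∀ k, |s + ((l'.take k).map f).sum| ≤ M := by
  intro n
  induction n with
  | zero =>
    intro l s hlen hs hb hsum
    rw [List.length_eq_zero_iff] at hlen
    subst hlen
    exact ⟨[], List.Perm.refl _, fun k => by simpa using hs⟩
  | succ n ih =>
    intro l s hlen hs hb hsum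
    have hlne : l ≠ [] := by rintro rfl; simp at hlen
    -- find a suitable element x
    have hpick : ∃ x ∈ l, |s + f x| ≤ M := by
      rcases le_or_gt s 0 with hsle | hsgt
      · -- pick a nonnegative element
        have hex : ∃ x ∈ l, 0 ≤ f x := by
          by_contra hall
          push_neg at hall
          have : (l.map f).sum ≤ (l.map f).length • (-1 : ℤ) := by
            refine List.sum_le_card_nsmul _ _ ?_
            intro x hx
            obtain ⟨y, hy, rfl⟩ := List.mem_map.mp hx
            have := hall y hy
            omega
          simp only [List.length_map, hlen, nsmul_eq_mul] at this
          have h1 : (l.map f).sum = -s := by omega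
          have h2 : ((n : ℤ) + 1) * (-1) = -(n + 1) := by ring
          omega
        obtain ⟨x, hx, hfx⟩ := hex
        have hfxM := hb x hx
        exact ⟨x, hx, by rw [abs_le] at *; omega⟩
      · -- pick a nonpositive element
        have hex : ∃ x ∈ l, f x ≤ 0 := by
          by_contra hall
          push_neg at hall
          have : (l.map f).length • (1 : ℤ) ≤ (l.map f).sum := by
            refine List.card_nsmul_le_sum _ _ ?_
            intro x hx
            obtain ⟨y, hy, rfl⟩ := List.mem_map.mp hx
            have := hall y hy
            omega
          simp only [List.length_map, hlen, nsmul_eq_mul] at this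
          omega
        obtain ⟨x, hx, hfx⟩ := hex
        have hfxM := hb x hx
        exact ⟨x, hx, by rw [abs_le] at *; omega⟩
    obtain ⟨x, hxl, hsx⟩ := hpick
    obtain ⟨l₁, l₂, rfl⟩ := List.append_of_mem hxl
    have hperm : (l₁ ++ x :: l₂).Perm (x :: (l₁ ++ l₂)) := List.perm_middle
    have hlen' : (l₁ ++ l₂).length = n := by
      simp only [List.length_append, List.length_cons] at hlen ⊢
      omega
    have hb' : ∀ y ∈ l₁ ++ l₂, |f y| ≤ M := by
      intro y hy
      refine hb y ?_
      rcases List.mem_append.mp hy with h | h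
      · exact List.mem_append.mpr (Or.inl h)
      · exact List.mem_append.mpr (Or.inr (List.mem_cons_of_mem _ h))
    have hsum' : (s + f x) + ((l₁ ++ l₂).map f).sum = 0 := by
      have := hperm.map f |>.sum_eq
      simp only [List.map_cons, List.sum_cons] at this
      omega
    obtain ⟨l', hl'p, hl'⟩ := ih (l₁ ++ l₂) (s + f x) hlen' hsx hb' hsum'
    refine ⟨x :: l', (hl'p.cons x).trans hperm.symm, ?_⟩
    intro k
    cases k with
    | zero => simpa using hs
    | succ k =>
      simp only [List.take_succ_cons, List.map_cons, List.sum_cons]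
      have := hl' k
      rw [abs_le] at *
      constructor <;> omega

lemma prefix_pigeonhole {α : Type*} (f : α → ℤ) (M : ℤ) (l' : List α)
    (hN : 2 * M + 2 ≤ (l'.length : ℤ))
    (hbound : ∀ k, |((l'.take k).map f).sum| ≤ M) :
    ∃ i i', 1 ≤ i ∧ i < i' ∧ i' ≤ l'.length ∧
      ((l'.take i).map f).sum = ((l'.take i').map f).sum := by
  set N := l'.length with hNdef
  have hM : 0 ≤ M := le_trans (abs_nonneg _) (hbound 0)
  have hcard : (Finset.Icc (-M) M).card < (Finset.range N).card := by
    rw [Int.card_Icc, Finset.card_range]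
    omega
  obtain ⟨n, hn, n', hn', hne, heq⟩ :=
    Finset.exists_ne_map_eq_of_card_lt_of_maps_to hcard
      (f := fun n => ((l'.take (n + 1)).map f).sum)
      (fun n _ => Finset.mem_Icc.mpr (abs_le.mp (hbound (n + 1))))
  simp only [Finset.mem_range] at hn hn'
  rcases lt_or_gt_of_ne hne with h | h
  · exact ⟨n + 1, n' + 1, by omega, by omega, by omega, heq⟩
  · exact ⟨n' + 1, n + 1, by omega, by omega, by omega, heq.symm⟩

lemma block_side {m t m₁ t₁ m₂ t₂ : ℕ} (A : Matrix (Fin m) (Fin t) ℤ)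
    (e : Fin m ≃ (Fin m₁ ⊕ Fin m₂)) (f : Fin t ≃ (Fin t₁ ⊕ Fin t₂))
    (hz1 : ∀ k₁ j₂, A (e.symm (Sum.inl k₁)) (f.symm (Sum.inr j₂)) = 0)
    (hz2 : ∀ k₂ j₁, A (e.symm (Sum.inr k₂)) (f.symm (Sum.inl j₁)) = 0)
    (g : Fin t → ℤ) (hg : InGraver A g)
    (j₀ : Fin t₁) (hj₀ : g (f.symm (Sum.inl j₀)) ≠ 0) :
    InGraver (fun k j => A (e.symm (Sum.inl k)) (f.symm (Sum.inl j)) : Matrix (Fin m₁) (Fin t₁) ℤ)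
      (fun j₁ => g (f.symm (Sum.inl j₁)))
    ∧ ∑ j, |g j| = ∑ j₁, |g (f.symm (Sum.inl j₁))| := by
  classical
  set B₁ : Matrix (Fin m₁) (Fin t₁) ℤ :=
    fun k j => A (e.symm (Sum.inl k)) (f.symm (Sum.inl j)) with hB₁
  set g₁ : Fin t₁ → ℤ := fun j₁ => g (f.symm (Sum.inl j₁)) with hg₁
  set g₂ : Fin t₂ → ℤ := fun j₂ => g (f.symm (Sum.inr j₂)) with hg₂
  set ext1 : (Fin t₁ → ℤ) → (Fin t → ℤ) :=
    fun v j => Sum.elim v (fun _ => (0:ℤ)) (f j) with hext1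
  set ext2 : (Fin t₂ → ℤ) → (Fin t → ℤ) :=
    fun v j => Sum.elim (fun _ => (0:ℤ)) v (f j) with hext2
  have hval1 : ∀ (v : Fin t₁ → ℤ) j₁, ext1 v (f.symm (Sum.inl j₁)) = v j₁ := by
    intro v j₁; simp [hext1]
  have hval1' : ∀ (v : Fin t₁ → ℤ) j₂, ext1 v (f.symm (Sum.inr j₂)) = 0 := by
    intro v j₂; simp [hext1]
  have hval2 : ∀ (v : Fin t₂ → ℤ) j₂, ext2 v (f.symm (Sum.inr j₂)) = v j₂ := by
    intro v j₂; simp [hext2]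
  have hval2' : ∀ (v : Fin t₂ → ℤ) j₁, ext2 v (f.symm (Sum.inl j₁)) = 0 := by
    intro v j₁; simp [hext2]
  have hsplit : ∀ φ : Fin t → ℤ,
      ∑ j, φ j = ∑ j₁, φ (f.symm (Sum.inl j₁)) + ∑ j₂, φ (f.symm (Sum.inr j₂)) := by
    intro φ
    rw [← Equiv.sum_comp f.symm φ, Fintype.sum_sum_type]
  have hrow : ∀ (u : Fin t → ℤ) (k : Fin m),
      A.mulVec u k = ∑ j₁, A k (f.symm (Sum.inl j₁)) * u (f.symm (Sum.inl j₁))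
        + ∑ j₂, A k (f.symm (Sum.inr j₂)) * u (f.symm (Sum.inr j₂)) := by
    intro u k
    show (dotProduct (A k) u) = _
    rw [dotProduct]
    exact hsplit (fun j => A k j * u j)
  have hker1 : ∀ v : Fin t₁ → ℤ, B₁.mulVec v = 0 → A.mulVec (ext1 v) = 0 := by
    intro v hv
    funext k
    show _ = (0:ℤ)
    have hk := e.symm_apply_apply k
    rcases he : e k with k₁ | k₂
    · rw [← hk, he, hrow]
      have h2 : ∑ j₂, A (e.symm (Sum.inl k₁)) (f.symm (Sum.inr j₂)) * ext1 v (f.symm (Sum.inr j₂)) = 0 :=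
        Finset.sum_eq_zero fun j₂ _ => by rw [hval1']; ring
      have h1 : ∑ j₁, A (e.symm (Sum.inl k₁)) (f.symm (Sum.inl j₁)) * ext1 v (f.symm (Sum.inl j₁)) = 0 := by
        have hvk := congrFun hv k₁
        simp only [Matrix.mulVec, dotProduct, Pi.zero_apply] at hvk
        calc ∑ j₁, A (e.symm (Sum.inl k₁)) (f.symm (Sum.inl j₁)) * ext1 v (f.symm (Sum.inl j₁))
            = ∑ j₁, B₁ k₁ j₁ * v j₁ := Finset.sum_congr rfl fun j₁ _ => by rw [hval1]
          _ = 0 := hvk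
      rw [h1, h2]; ring
    · rw [← hk, he, hrow]
      have h1 : ∑ j₁, A (e.symm (Sum.inr k₂)) (f.symm (Sum.inl j₁)) * ext1 v (f.symm (Sum.inl j₁)) = 0 :=
        Finset.sum_eq_zero fun j₁ _ => by rw [hz2]; ring
      have h2 : ∑ j₂, A (e.symm (Sum.inr k₂)) (f.symm (Sum.inr j₂)) * ext1 v (f.symm (Sum.inr j₂)) = 0 :=
        Finset.sum_eq_zero fun j₂ _ => by rw [hval1']; ring
      rw [h1, h2]; ring
  have hg1ker : B₁.mulVec g₁ = 0 := by
    funext k₁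
    show _ = (0:ℤ)
    have hrowk := hrow g (e.symm (Sum.inl k₁))
    have hAg := congrFun hg.2.1 (e.symm (Sum.inl k₁))
    simp only [Pi.zero_apply] at hAg
    rw [hAg] at hrowk
    have h2 : ∑ j₂, A (e.symm (Sum.inl k₁)) (f.symm (Sum.inr j₂)) * g (f.symm (Sum.inr j₂)) = 0 :=
      Finset.sum_eq_zero fun j₂ _ => by rw [hz1]; ring
    rw [h2, add_zero] at hrowk
    show ∑ j₁, B₁ k₁ j₁ * g₁ j₁ = 0
    exact hrowk.symm
  have hgj : ∀ j, g j = Sum.elim g₁ g₂ (f j) := by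
    intro j
    rcases hfj : f j with j₁ | j₂ <;> simp only [hfj, Sum.elim_inl, Sum.elim_inr, hg₁, hg₂] <;>
      rw [← hfj, Equiv.symm_apply_apply]
  have hgsplit : g = ext1 g₁ + ext2 g₂ := by
    funext j
    rw [Pi.add_apply, hgj j]
    rcases hfj : f j with j₁ | j₂ <;> simp [hext1, hext2, hfj]
  have hAg1 : A.mulVec (ext1 g₁) = 0 := hker1 g₁ hg1ker
  have hAg2 : A.mulVec (ext2 g₂) = 0 := by
    have : ext2 g₂ = g - ext1 g₁ := by rw [hgsplit]; abel
    rw [this, Matrix.mulVec_sub, hg.2.1, hAg1, sub_zero]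
  have hne1 : ext1 g₁ ≠ 0 := by
    intro h
    apply hj₀
    have := congrFun h (f.symm (Sum.inl j₀))
    rw [hval1] at this
    exact this
  have hscg : SignCompat (ext1 g₁) (ext2 g₂) := by
    intro j
    rcases hfj : f j with j₁ | j₂ <;> simp [hext1, hext2, hfj]
  have hz2g : ext2 g₂ = 0 := by
    by_contra hne2
    exact hg.2.2 ⟨ext1 g₁, ext2 g₂, hne1, hne2, hAg1, hAg2, hscg, hgsplit⟩
  have hg2zero : ∀ j₂, g₂ j₂ = 0 := by
    intro j₂
    have := congrFun hz2g (f.symm (Sum.inr j₂))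
    rw [hval2] at this
    exact this
  constructor
  · refine ⟨?_, hg1ker, ?_⟩
    · intro h
      exact hj₀ (congrFun h j₀)
    · rintro ⟨v, w, hv, hw, hBv, hBw, hsc, heq⟩
      refine hg.2.2 ⟨ext1 v, ext1 w, ?_, ?_, hker1 v hBv, hker1 w hBw, ?_, ?_⟩
      · intro h
        apply hv
        funext j₁
        have := congrFun h (f.symm (Sum.inl j₁))
        rw [hval1] at this
        exact this
      · intro h
        apply hw
        funext j₁
        have := congrFun h (f.symm (Sum.inl j₁))
        rw [hval1] at this
        exact this
      · intro j
        rcases hfj : f j with j₁ | j₂ <;> simp [hext1, hfj]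
        exact hsc j₁
      · funext j
        rw [hgj j, Pi.add_apply]
        rcases hfj : f j with j₁ | j₂ <;> simp [hext1, hfj, hg2zero]
        rw [heq]; rfl
  · rw [hsplit (fun j => |g j|)]
    have h2 : ∑ j₂, |g (f.symm (Sum.inr j₂))| = 0 :=
      Finset.sum_eq_zero fun j₂ _ => by rw [show g (f.symm (Sum.inr j₂)) = g₂ j₂ from rfl, hg2zero]; simp
    rw [h2, add_zero]

lemma graver_aux (Δ : ℤ) (hΔ1 : 1 ≤ Δ) :
    ∀ {d m t : ℕ} {A : Matrix (Fin m) (Fin t) ℤ}, HasTreedepth d m t A →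
      (∀ k j, |A k j| ≤ Δ) → ∀ g : Fin t → ℤ, InGraver A g →
      ∑ j, |g j| ≤ (3 * Δ) ^ (2 ^ d - 1) := by
  have h3Δ : (1 : ℤ) ≤ 3 * Δ := by linarith
  intro d m t A htd
  induction htd with
  | empty d t A =>
    intro hΔ g hg
    have hone : (1 : ℤ) ≤ (3 * Δ) ^ (2 ^ d - 1) := one_le_pow₀ h3Δ
    have hker : ∀ v : Fin t → ℤ, A.mulVec v = 0 := fun v => funext fun k => k.elim0
    have hle : ∑ j, |g j| ≤ 1 := by
      by_contra hle
      push_neg at hle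
      obtain ⟨j₀, hj₀⟩ := Function.ne_iff.mp hg.1
      simp only [Pi.zero_apply] at hj₀
      set v : Fin t → ℤ := fun j => if j = j₀ then Int.sign (g j₀) else 0 with hv
      have hsign0 : Int.sign (g j₀) ≠ 0 := by simpa using hj₀
      have hsign1 : |Int.sign (g j₀)| = 1 := by
        rcases lt_trichotomy (g j₀) 0 with h'|h'|h' <;>
          simp_all [Int.sign_eq_neg_one_of_neg, Int.sign_eq_one_of_pos]
      have hnv : ∑ j, |v j| = 1 := by
        simp [hv, apply_ite (fun x : ℤ => |x|), Finset.sum_ite_eq', hsign1]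
      have hw : g - v ≠ 0 := by
        intro h
        have : g = v := by
          funext j; have := congrFun h j; simp only [Pi.sub_apply, Pi.zero_apply] at this; linarith
        rw [this] at hle
        omega
      refine hg.2.2 ⟨v, g - v, ?_, hw, hker v, hker _, ?_, by funext j; simp⟩
      · intro h
        have := congrFun h j₀
        simp [hv] at this
        exact hj₀ this
      · intro j
        rcases eq_or_ne j j₀ with rfl | hj
        · have hs : Int.sign (g j) * g j = |g j| := by
            rcases lt_trichotomy (g j) 0 with h'|h'|h' <;>
              simp_all [Int.sign_eq_neg_one_of_neg, Int.sign_eq_one_of_pos, abs_of_neg, abs_of_pos]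
          have habs : 1 ≤ |g j| := Int.one_le_abs hj₀
          have hss : Int.sign (g j) * Int.sign (g j) = 1 := by
            rcases (abs_eq (by norm_num : (0:ℤ) ≤ 1)).mp hsign1 with h' | h' <;> rw [h'] <;> ring
          have hvj : v j = Int.sign (g j) := by simp [hv]
          rw [Pi.sub_apply, hvj]
          nlinarith
        · simp [hv, hj]
    linarith
  | blockdiag m₁ m₂ t₁ t₂ A e f hs1 hs2 hz1 hz2 hb1 hb2 ih1 ih2 =>
    intro hΔ g hg
    obtain ⟨j, hj⟩ := Function.ne_iff.mp hg.1
    simp only [Pi.zero_apply] at hj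
    rcases hfj : f j with j₁ | j₂
    · have hj' : g (f.symm (Sum.inl j₁)) ≠ 0 := by
        rw [← hfj, Equiv.symm_apply_apply]; exact hj
      obtain ⟨hGr, hnorm⟩ := block_side A e f hz1 hz2 g hg j₁ hj'
      rw [hnorm]
      exact ih1 (fun k j => hΔ _ _) _ hGr
    · have hj' : g ((f.trans (Equiv.sumComm _ _)).symm (Sum.inl j₂)) ≠ 0 := by
        show g (f.symm (Sum.inr j₂)) ≠ 0
        rw [← hfj, Equiv.symm_apply_apply]; exact hj
      obtain ⟨hGr, hnorm⟩ := block_side A (e.trans (Equiv.sumComm _ _))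
        (f.trans (Equiv.sumComm _ _))
        (fun k₂ j₁ => hz2 k₂ j₁) (fun k₁ j₂' => hz1 k₁ j₂') g hg j₂ hj'
      rw [hnorm]
      exact ih2 (fun k j => hΔ _ _) _ hGr
  | delrow A k₀ h ih =>
    rename_i d m t
    intro hΔ g hg
    obtain ⟨A', hA'⟩ : ∃ A' : Matrix (Fin m) (Fin t) ℤ, A' = fun k j => A (k₀.succAbove k) j :=
      ⟨_, rfl⟩
    obtain ⟨a, ha⟩ : ∃ a : Fin t → ℤ, a = A k₀ := ⟨_, rfl⟩
    obtain ⟨B, hB⟩ : ∃ B : ℤ, B = (3 * Δ) ^ (2 ^ d - 1) := ⟨_, rfl⟩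
    have hB1 : 1 ≤ B := hB ▸ one_le_pow₀ h3Δ
    have hIH : ∀ u, InGraver A' u → ∑ j, |u j| ≤ B := by
      rw [hA', hB]; exact ih (fun k j => hΔ _ _)
    have hker' : A'.mulVec g = 0 := by
      rw [hA']; exact funext fun k => congrFun hg.2.1 (k₀.succAbove k)
    have hcomb : ∀ u : Fin t → ℤ, A'.mulVec u = 0 →
        dotProduct a u = 0 → A.mulVec u = 0 := by
      intro u h1 h2
      rw [hA'] at h1
      rw [ha] at h2
      funext k
      show _ = (0:ℤ)
      rcases eq_or_ne k k₀ with rfl | hk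
      · exact h2
      · obtain ⟨k', hk'⟩ := Fin.exists_succAbove_eq hk
        rw [← hk']
        exact congrFun h1 k'
    have hag : dotProduct a g = 0 := by rw [ha]; exact congrFun hg.2.1 k₀
    obtain ⟨l, hl, hlsum⟩ := graver_decomp A' (∑ j, |g j|).toNat g (le_refl _) hker'
    have hlconf : ∀ h' ∈ l, Conf h' g := fun h' hh => (hl h' hh).2
    have hnormsum : ∑ j, |g j| = (l.map (fun h' => ∑ j, |h' j|)).sum := by
      conv_lhs => rw [← hlsum]
      exact norm_additivity hlconf
    have hcount : ∀ h' ∈ l, 1 ≤ ∑ j, |h' j| ∧ ∑ j, |h' j| ≤ B :=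
      fun h' hh => ⟨norm_pos_of_ne (hl h' hh).1.1, hIH h' (hl h' hh).1⟩
    obtain ⟨fd, hfd⟩ : ∃ fd : (Fin t → ℤ) → ℤ, fd = fun v => dotProduct a v := ⟨_, rfl⟩
    have hfb : ∀ h' ∈ l, |fd h'| ≤ Δ * B := by
      intro h' hh
      have hfd' : |fd h'| = |∑ j, a j * h' j| := by rw [hfd]; rfl
      have haj : ∀ j, |a j| ≤ Δ := by rw [ha]; exact fun j => hΔ k₀ j
      rw [hfd']
      calc |∑ j, a j * h' j| ≤ ∑ j, |a j * h' j| := Finset.abs_sum_le_sum_abs _ _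
        _ = ∑ j, |a j| * |h' j| := by simp [abs_mul]
        _ ≤ ∑ j, Δ * |h' j| :=
            Finset.sum_le_sum fun j _ => mul_le_mul_of_nonneg_right (haj j) (abs_nonneg _)
        _ = Δ * ∑ j, |h' j| := by rw [Finset.mul_sum]
        _ ≤ Δ * B := mul_le_mul_of_nonneg_left (hcount h' hh).2 (by linarith)
    have hsum0 : (0:ℤ) + (l.map fd).sum = 0 := by
      have hds := dot_list_sum a l
      rw [hlsum] at hds
      rw [zero_add, hfd, ← hds, hag]
    have hNle : (l.length : ℤ) ≤ 2 * (Δ * B) + 1 := by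
      by_contra hN
      push_neg at hN
      have hM0 : (0:ℤ) ≤ Δ * B := by nlinarith
      obtain ⟨l', hperm, hpre⟩ := order_lemma fd (Δ * B) l.length l 0 rfl
        (by rw [abs_zero]; exact hM0) hfb hsum0
      simp only [zero_add] at hpre
      have hlen' : l'.length = l.length := hperm.length_eq
      obtain ⟨i, i', hi1, hii, hi'N, heq⟩ := prefix_pigeonhole fd (Δ * B) l'
        (by push_cast [hlen']; linarith) hpre
      obtain ⟨c, hc⟩ : ∃ c : List (Fin t → ℤ), c = (l'.drop i).take (i' - i) := ⟨_, rfl⟩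
      obtain ⟨r, hr⟩ : ∃ r : List (Fin t → ℤ), r = l'.take i ++ l'.drop i' := ⟨_, rfl⟩
      have hmem : ∀ x ∈ l', x ∈ l := fun x hx => hperm.mem_iff.mp hx
      have hcmem : ∀ x ∈ c, x ∈ l := by
        intro x hx
        rw [hc] at hx
        exact hmem x (List.mem_of_mem_drop (List.mem_of_mem_take hx))
      have hrmem : ∀ x ∈ r, x ∈ l := by
        intro x hx
        rw [hr] at hx
        rcases List.mem_append.mp hx with h' | h'
        · exact hmem x (List.mem_of_mem_take h')
        · exact hmem x (List.mem_of_mem_drop h')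
      have hsplitl : l'.take i' = l'.take i ++ c := by
        rw [hc, ← List.take_add]
        congr 1
        clear * - hii
        omega
      have hcsum0 : (c.map fd).sum = 0 := by
        have h1 := heq
        rw [hsplitl, List.map_append, List.sum_append] at h1
        linarith
      obtain ⟨v, hv⟩ : ∃ v : Fin t → ℤ, v = c.sum := ⟨_, rfl⟩
      obtain ⟨w, hw⟩ : ∃ w : Fin t → ℤ, w = r.sum := ⟨_, rfl⟩
      have hvw : g = v + w := by
        have hsg : l'.sum = g := by rw [hperm.sum_eq, hlsum]
        calc g = l'.sum := hsg.symm
          _ = (l'.take i').sum + (l'.drop i').sum := by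
              conv_lhs => rw [← List.take_append_drop i' l']
              rw [List.sum_append]
          _ = ((l'.take i).sum + c.sum) + (l'.drop i').sum := by rw [hsplitl, List.sum_append]
          _ = v + w := by rw [hv, hw, hr, List.sum_append]; abel
      have hvker' : A'.mulVec v = 0 := by
        rw [hv]
        exact mulVec_list_sum_zero A' (fun x hx => (hl x (hcmem x hx)).1.2.1)
      have hvdot : dotProduct a v = 0 := by
        rw [hv, dot_list_sum]
        rw [hfd] at hcsum0
        exact hcsum0
      have hvker : A.mulVec v = 0 := hcomb v hvker' hvdot
      have hwker' : A'.mulVec w = 0 := by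
        rw [hw]
        exact mulVec_list_sum_zero A' (fun x hx => (hl x (hrmem x hx)).1.2.1)
      have hwdot : dotProduct a w = 0 := by
        have hag' := hag
        rw [hvw, dotProduct_add, hvdot, zero_add] at hag'
        exact hag'
      have hwker : A.mulVec w = 0 := hcomb w hwker' hwdot
      have hclen : 1 ≤ c.length := by
        rw [hc, List.length_take, List.length_drop, hlen']
        have hNl : 2 * (Δ * B) + 1 < (l.length : ℤ) := hN
        have hNl' : 1 ≤ l.length := by
          rcases Nat.eq_zero_or_pos l.length with h0 | h0
          · rw [h0] at hNl; push_cast at hNl; nlinarith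
          · exact h0
        clear * - hii hi'N hlen' hNl'
        omega
      have hrlen : 1 ≤ r.length := by
        rw [hr, List.length_append, List.length_take, hlen']
        clear * - hi1 hii hi'N hlen'
        omega
      have hvnorm : (c.length : ℤ) ≤ ∑ j, |v j| := by
        rw [hv, norm_additivity (fun x hx => hlconf x (hcmem x hx))]
        have := List.card_nsmul_le_sum (c.map (fun h' => ∑ j, |h' j|)) (1:ℤ)
          (by
            intro x hx
            obtain ⟨h', hh, rfl⟩ := List.mem_map.mp hx
            exact (hcount h' (hcmem h' hh)).1)
        simpa [nsmul_eq_mul] using this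
      have hwnorm : (r.length : ℤ) ≤ ∑ j, |w j| := by
        rw [hw, norm_additivity (fun x hx => hlconf x (hrmem x hx))]
        have := List.card_nsmul_le_sum (r.map (fun h' => ∑ j, |h' j|)) (1:ℤ)
          (by
            intro x hx
            obtain ⟨h', hh, rfl⟩ := List.mem_map.mp hx
            exact (hcount h' (hrmem h' hh)).1)
        simpa [nsmul_eq_mul] using this
      have hv0 : v ≠ 0 := by
        intro h0
        rw [h0] at hvnorm
        simp only [Pi.zero_apply, abs_zero, Finset.sum_const_zero] at hvnorm
        have : (1:ℤ) ≤ (c.length : ℤ) := by exact_mod_cast hclen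
        linarith
      have hw0 : w ≠ 0 := by
        intro h0
        rw [h0] at hwnorm
        simp only [Pi.zero_apply, abs_zero, Finset.sum_const_zero] at hwnorm
        have : (1:ℤ) ≤ (r.length : ℤ) := by exact_mod_cast hrlen
        linarith
      have hsc : SignCompat v w := by
        rw [hv, hw]
        exact conf_sums_signCompat (fun x hx => hlconf x (hcmem x hx))
          (fun x hx => hlconf x (hrmem x hx))
      exact hg.2.2 ⟨v, w, hv0, hw0, hvker, hwker, hsc, hvw⟩
    have hfin : (l.map (fun h' => ∑ j, |h' j|)).sum ≤ (l.length : ℤ) * B := by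
      have := List.sum_le_card_nsmul (l.map (fun h' => ∑ j, |h' j|)) B
        (by
          intro x hx
          obtain ⟨h', hh, rfl⟩ := List.mem_map.mp hx
          exact (hcount h' hh).2)
      simpa [nsmul_eq_mul] using this
    have hexp : (3 * Δ) ^ (2 ^ (d + 1) - 1) = 3 * Δ * B ^ 2 := by
      have h2d : 2 ^ (d + 1) - 1 = (2 ^ d - 1) * 2 + 1 := by
        have h1 : 1 ≤ 2 ^ d := Nat.one_le_two_pow
        rw [pow_succ]
        clear * - h1
        omega
      rw [h2d, pow_succ, pow_mul, ← hB]
      ring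
    rw [hnormsum, hexp]
    calc (l.map (fun h' => ∑ j, |h' j|)).sum ≤ (l.length : ℤ) * B := hfin
      _ ≤ (2 * (Δ * B) + 1) * B := mul_le_mul_of_nonneg_right hNle (by linarith)
      _ ≤ 3 * Δ * B ^ 2 := by nlinarith

/-- A matrix of dual treedepth at most `d` with entries bounded
by `Δ` has all Graver basis elements of `ℓ₁`-norm at most `(3Δ)^(2^d − 1)`. -/
theorem graver_norm_treedepth
    (d m t : ℕ) (A : Matrix (Fin m) (Fin t) ℤ)
    (htd : HasTreedepth d m t A)
    (Δ : ℤ) (hΔ1 : 1 ≤ Δ) (hΔ : ∀ k j, |A k j| ≤ Δ)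
    (g : Fin t → ℤ) (hg : InGraver A g) :
    ∑ j, |g j| ≤ (3 * Δ) ^ (2 ^ d - 1) := by
  exact graver_aux Δ hΔ1 htd hΔ g hg
end

section
/- Fix an integer n ≥ 3 and a real ε > 0. Consider the LP in the nonnegative variables x^{(i)} = (x_1^{(i)}, x_2^{(i)}) ∈ ℝ², x^{(i)} ≥ 0, i = 1,…,n: maximize Σ_{i=1}^n ((2+ε)x_1^{(i)} + (3−ε)x_2^{(i)}) subject to 2x_1^{(i)} + 3x_2^{(i)} = 3 for i = 1,…,n−1, 2x_1^{(n)} + 3x_2^{(n)} = 6n, and the linking constraint Σ_{i=1}^{n−1}(x_1^{(i)} + x_2^{(i)}) − (x_1^{(n)} + x_2^{(n)}) = 3(n−1)/2 − 3n. Then this LP has a unique optimal solution x*, given by x*^{(i)} = (3/2, 0) for i = 1,…,n−1 and x*^{(n)} = (3n, 0). -/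
open Finset

/-- The explicit block-structured LP with blocks
`2x₁ + 3x₂ = 3` (for `i < n`), `2x₁ + 3x₂ = 6n` (for `i = n`), the linking
constraint, and objective `Σ ((2+ε)x₁ + (3−ε)x₂)` has the unique optimum
`x* = ((3/2,0),…,(3/2,0),(3n,0))`. -/
theorem bad_lp_unique_optimum
    (n : ℕ) (hn : 3 ≤ n) (ε : ℝ) (hε : 0 < ε)
    (last : Fin n) (hlast : (last : ℕ) = n - 1)
    (Feas : Set (Fin n → ℝ × ℝ))
    (hFeas : Feas = {x |
      (∀ i, 0 ≤ (x i).1 ∧ 0 ≤ (x i).2) ∧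
      (∀ i, i ≠ last → 2 * (x i).1 + 3 * (x i).2 = 3) ∧
      2 * (x last).1 + 3 * (x last).2 = 6 * (n : ℝ) ∧
      (∑ i ∈ Finset.univ.erase last, ((x i).1 + (x i).2))
          - ((x last).1 + (x last).2)
        = 3 * ((n : ℝ) - 1) / 2 - 3 * (n : ℝ)})
    (obj : (Fin n → ℝ × ℝ) → ℝ)
    (hobj : obj = fun x => ∑ i, ((2 + ε) * (x i).1 + (3 - ε) * (x i).2))
    (xstar : Fin n → ℝ × ℝ)
    (hxstar : xstar = fun i => if i = last then (3 * (n : ℝ), 0) else (3 / 2, 0)) :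
    xstar ∈ Feas ∧ (∀ y ∈ Feas, obj y ≤ obj xstar) ∧
      ∀ y ∈ Feas, obj y = obj xstar → y = xstar := by
  have hmem : last ∈ (Finset.univ : Finset (Fin n)) := Finset.mem_univ _
  have hcard : ((Finset.univ.erase last).card : ℝ) = (n : ℝ) - 1 := by
    rw [Finset.card_erase_of_mem hmem, Finset.card_univ, Fintype.card_fin,
      Nat.cast_sub (by omega), Nat.cast_one]
  set C : ℝ := ((n : ℝ) - 1) * ((2 + ε) * (3 / 2)) + (2 + ε) * (3 * (n : ℝ)) with hC
  -- objective value at xstar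
  have objx : obj xstar = C := by
    rw [hobj, hxstar]
    simp only
    rw [← Finset.sum_erase_add _ _ hmem]
    have h1 : ∑ i ∈ Finset.univ.erase last,
        ((2 + ε) * ((if i = last then ((3 * (n:ℝ)), (0:ℝ)) else (3/2, 0)) : ℝ × ℝ).1
          + (3 - ε) * ((if i = last then ((3 * (n:ℝ)), (0:ℝ)) else (3/2, 0)) : ℝ × ℝ).2)
        = ∑ i ∈ Finset.univ.erase last, ((2 + ε) * (3/2)) := by
      refine Finset.sum_congr rfl fun i hi => ?_
      rw [if_neg (Finset.ne_of_mem_erase hi)]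
      norm_num
    rw [h1, Finset.sum_const, nsmul_eq_mul, hcard, if_pos rfl]
    ring
  -- key computation for any feasible y
  have key : ∀ y ∈ Feas,
      obj y = C - 5 * ε * (∑ i ∈ Finset.univ.erase last, (y i).2) ∧
      (y last).2 = ∑ i ∈ Finset.univ.erase last, (y i).2 := by
    intro y hy
    rw [hFeas] at hy
    obtain ⟨hnn, hblk, hlastc, hlink⟩ := hy
    have h1 : ∀ i ∈ Finset.univ.erase last, (y i).1 = 3/2 - 3/2 * (y i).2 := by
      intro i hi
      have := hblk i (Finset.ne_of_mem_erase hi)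
      linarith
    set S : ℝ := ∑ i ∈ Finset.univ.erase last, (y i).2 with hS
    have hsum1 : ∑ i ∈ Finset.univ.erase last, ((y i).1 + (y i).2)
        = ((n : ℝ) - 1) * (3/2) - (1/2) * S := by
      have : ∑ i ∈ Finset.univ.erase last, ((y i).1 + (y i).2)
          = ∑ i ∈ Finset.univ.erase last, (3/2 - (1/2) * (y i).2) := by
        refine Finset.sum_congr rfl fun i hi => ?_
        rw [h1 i hi]; ring
      rw [this, Finset.sum_sub_distrib, Finset.sum_const, nsmul_eq_mul, hcard,
        ← Finset.mul_sum, ← hS]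
    rw [hsum1] at hlink
    have hb : (y last).2 = S := by linarith
    have ha : (y last).1 = 3 * (n : ℝ) - 3/2 * (y last).2 := by linarith
    refine ⟨?_, hb⟩
    rw [hobj]
    simp only
    rw [← Finset.sum_erase_add _ _ hmem]
    have h2 : ∑ i ∈ Finset.univ.erase last, ((2 + ε) * (y i).1 + (3 - ε) * (y i).2)
        = ∑ i ∈ Finset.univ.erase last, ((2 + ε) * (3/2) - (5/2) * ε * (y i).2) := by
      refine Finset.sum_congr rfl fun i hi => ?_
      rw [h1 i hi]; ring
    rw [h2, Finset.sum_sub_distrib, Finset.sum_const, nsmul_eq_mul, hcard,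
      ← Finset.mul_sum, ← hS, ha, hb, hC]
    ring
  refine ⟨?_, ?_, ?_⟩
  · -- feasibility of xstar
    rw [hFeas, hxstar]
    refine ⟨?_, ?_, ?_, ?_⟩
    · intro i
      by_cases h : i = last <;> simp [h] <;> positivity
    · intro i h
      simp only [if_neg h]; norm_num
    · simp only [if_pos rfl]; push_cast; ring_nf
    · have h1 : ∑ i ∈ Finset.univ.erase last,
          (((if i = last then ((3 * (n:ℝ)), (0:ℝ)) else (3/2, 0)) : ℝ × ℝ).1
            + ((if i = last then ((3 * (n:ℝ)), (0:ℝ)) else (3/2, 0)) : ℝ × ℝ).2)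
          = ∑ i ∈ Finset.univ.erase last, (3/2 : ℝ) := by
        refine Finset.sum_congr rfl fun i hi => ?_
        rw [if_neg (Finset.ne_of_mem_erase hi)]
        norm_num
      rw [h1, Finset.sum_const, nsmul_eq_mul, hcard]
      have h2 : ((fun i => if i = last then ((3 * (n:ℝ)), (0:ℝ)) else (3/2, 0)) last)
          = ((3 * (n:ℝ)), (0:ℝ)) := by simp
      rw [h2]
      ring
  · -- optimality
    intro y hy
    obtain ⟨hval, -⟩ := key y hy
    have hSnn : 0 ≤ ∑ i ∈ Finset.univ.erase last, (y i).2 := by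
      refine Finset.sum_nonneg fun i _ => ?_
      rw [hFeas] at hy
      exact (hy.1 i).2
    rw [hval, objx]
    nlinarith
  · -- uniqueness
    intro y hy heq
    obtain ⟨hval, hb⟩ := key y hy
    rw [hval, objx] at heq
    have hSnn : ∀ i ∈ Finset.univ.erase last, 0 ≤ (y i).2 := by
      intro i _
      rw [hFeas] at hy
      exact (hy.1 i).2
    have hS0 : ∑ i ∈ Finset.univ.erase last, (y i).2 = 0 := by
      have h5 : 5 * ε * (∑ i ∈ Finset.univ.erase last, (y i).2) = 0 := by linarith
      have := Finset.sum_nonneg hSnn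
      nlinarith
    have hzero : ∀ i ∈ Finset.univ.erase last, (y i).2 = 0 :=
      (Finset.sum_eq_zero_iff_of_nonneg hSnn).1 hS0
    rw [hFeas] at hy
    obtain ⟨hnn, hblk, hlastc, hlink⟩ := hy
    rw [hxstar]
    funext i
    by_cases h : i = last
    · subst h
      have hb0 : (y i).2 = 0 := by rw [hb, hS0]
      have ha : (y i).1 = 3 * (n : ℝ) := by rw [hb0] at hlastc; linarith
      rw [if_pos rfl]
      exact Prod.ext ha hb0
    · have hi : i ∈ Finset.univ.erase last := Finset.mem_erase.2 ⟨h, Finset.mem_univ i⟩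
      have hb0 : (y i).2 = 0 := hzero i hi
      have ha : (y i).1 = 3/2 := by have := hblk i h; rw [hb0] at this; linarith
      rw [if_neg h]
      exact Prod.ext ha hb0
end
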